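/- arXiv:1006.5227 — 7 statements merged into one kernel-verified Lean document; each statement's English description precedes it below -/
import Mathlib

section
/- Fix d ≥ 1 and k ≥ 1. Let μ_H be the Haar probability measure on the unitary group U(d), and for a unitary U write U^{⊗k,k} = U^{⊗k} ⊗ (conj U)^{⊗k}, a matrix acting on the 2k-fold tensor power of ℂ^d. Let G_H = ∫ U^{⊗k,k} dμ_H(U), and let μ be any Borel probability measure on U(d) with G_μ = ∫ U^{⊗k,k} dμ(U). Then every vector v with G_H · v = v satisfies G_μ · v = v; equivalently, every eigenvector of G_H with eigenvalue 1 is an eigenvector of G_μ with eigenvalue 1. (Indeed, G_H v = v implies U^{⊗k,k} v = v for every unitary U.) -/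
open Matrix MeasureTheory Kronecker

/-- The `k`-fold tensor power of a `d × d` matrix, as a matrix indexed by tuples. -/
noncomputable def tensorPow (d k : ℕ) (U : Matrix (Fin d) (Fin d) ℂ) :
    Matrix (Fin k → Fin d) (Fin k → Fin d) ℂ :=
  Matrix.of fun x y => ∏ i, U (x i) (y i)

/-- `U^{⊗k,k} = U^{⊗k} ⊗ (conj U)^{⊗k}`. -/
noncomputable def tensorPowKK (d k : ℕ) (U : Matrix (Fin d) (Fin d) ℂ) :
    Matrix ((Fin k → Fin d) × (Fin k → Fin d)) ((Fin k → Fin d) × (Fin k → Fin d)) ℂ :=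
  tensorPow d k U ⊗ₖ tensorPow d k (U.map (starRingEnd ℂ))

/-!
Left invariance of Haar measure gives `U^{⊗k,k} G_H v = ∫ (UV)^{⊗k,k} v dμ_H(V) = G_H v`, so a fixed
vector `v` of `G_H` is fixed by every `U^{⊗k,k}`; averaging over any probability measure `μ` then
gives `G_μ v = v`. Haar measure is finite because the unitary group is compact.
-/

lemma tensorPow_one (d k : ℕ) : tensorPow d k 1 = 1 := by
  ext x y
  simp only [tensorPow, of_apply, one_apply, Finset.prod_boole, Finset.mem_univ, true_implies,
    funext_iff]

lemma tensorPow_mul (d k : ℕ) (U V : Matrix (Fin d) (Fin d) ℂ) :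
    tensorPow d k (U * V) = tensorPow d k U * tensorPow d k V := by
  ext x y
  simp only [tensorPow, of_apply, mul_apply, Finset.prod_univ_sum, Fintype.piFinset_univ,
    Finset.prod_mul_distrib]

noncomputable def tensorPowKKHom (d k : ℕ) :
    Matrix (Fin d) (Fin d) ℂ →*
      Matrix ((Fin k → Fin d) × (Fin k → Fin d)) ((Fin k → Fin d) × (Fin k → Fin d)) ℂ where
  toFun := tensorPowKK d k
  map_one' := by simp [tensorPowKK, tensorPow_one]
  map_mul' U V := by
    simp only [tensorPowKK, Matrix.map_mul, tensorPow_mul, mul_kronecker_mul]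

lemma continuous_tensorPowKK (d k : ℕ) : Continuous (tensorPowKK d k) :=
  continuous_pi fun _ => continuous_pi fun _ => by
    simp only [tensorPowKK, tensorPow, kroneckerMap_apply, of_apply, map_apply]
    fun_prop

instance Matrix.unitaryGroup.compactSpace {n : Type*} [Fintype n] [DecidableEq n] :
    CompactSpace (unitaryGroup n ℂ) :=
  isCompact_iff_compactSpace.mp <| .of_isClosed_subset
    (isCompact_univ_pi fun _ => isCompact_univ_pi fun _ => isCompact_closedBall (0 : ℂ) 1)
    isClosed_unitary fun U hU i _ j _ => by simpa using entry_norm_bound_of_unitary hU i j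

section MomentOperator

variable {G ι : Type*} [Fintype ι] [TopologicalSpace G] [CompactSpace G] [MeasurableSpace G]
  {μ : Measure G} [IsFiniteMeasure μ]

lemma Continuous.integrable_of_compactSpace [OpensMeasurableSpace G] {E : Type*}
    [NormedAddCommGroup E] {f : G → E} (hf : Continuous f) : Integrable f μ :=
  hf.integrable_of_hasCompactSupport (.of_compactSpace f)

lemma mulVec_eq_integral_mulVec [OpensMeasurableSpace G] {ρ : G → Matrix ι ι ℂ}
    (hρ : Continuous ρ) {M : Matrix ι ι ℂ} (hM : ∀ a b, M a b = ∫ g, ρ g a b ∂μ) (v : ι → ℂ) :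
    M *ᵥ v = ∫ g, ρ g *ᵥ v ∂μ := by
  have hρv : Continuous fun g => ρ g *ᵥ v := by fun_prop
  ext a
  rw [eval_integral (f := fun g => ρ g *ᵥ v) fun a =>
    ((continuous_apply a).comp hρv).integrable_of_compactSpace]
  simp only [mulVec, dotProduct, hM, ← integral_mul_const]
  exact (integral_finsetSum _ fun b _ =>
    ((hρ.matrix_elem a b).mul continuous_const).integrable_of_compactSpace).symm

lemma mulVec_eq_self_of_integral_mulVec_eq_self [BorelSpace G] [DecidableEq ι] [Group G]
    [ContinuousMul G] [μ.IsMulLeftInvariant] (ρ : G →* Matrix ι ι ℂ) (hρ : Continuous ρ)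
    {v : ι → ℂ} (hv : ∫ g, ρ g *ᵥ v ∂μ = v) (g : G) : ρ g *ᵥ v = v :=
  calc ρ g *ᵥ v = ρ g *ᵥ ∫ h, ρ h *ᵥ v ∂μ := by rw [hv]
    _ = ∫ h, ρ g *ᵥ (ρ h *ᵥ v) ∂μ :=
      ((LinearMap.toContinuousLinearMap (mulVecLin (ρ g))).integral_comp_comm
        (Continuous.integrable_of_compactSpace (by fun_prop))).symm
    _ = ∫ h, ρ (g * h) *ᵥ v ∂μ := by simp only [mulVec_mulVec, map_mul]
    _ = v := by rw [integral_mul_left_eq_self (fun h => ρ h *ᵥ v) g, hv]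

end MomentOperator

theorem fixed_points_haar_subset_fixed_points_general (d k : ℕ)
    [MeasurableSpace (Matrix.unitaryGroup (Fin d) ℂ)]
    [BorelSpace (Matrix.unitaryGroup (Fin d) ℂ)]
    (μH μ : Measure (Matrix.unitaryGroup (Fin d) ℂ))
    [μH.IsHaarMeasure] [IsProbabilityMeasure μ]
    (GH Gμ : Matrix ((Fin k → Fin d) × (Fin k → Fin d))
      ((Fin k → Fin d) × (Fin k → Fin d)) ℂ)
    (hGH : ∀ a b, GH a b =
      ∫ U : Matrix.unitaryGroup (Fin d) ℂ,
        tensorPowKK d k (U : Matrix (Fin d) (Fin d) ℂ) a b ∂μH)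
    (hGμ : ∀ a b, Gμ a b =
      ∫ U : Matrix.unitaryGroup (Fin d) ℂ,
        tensorPowKK d k (U : Matrix (Fin d) (Fin d) ℂ) a b ∂μ)
    (v : ((Fin k → Fin d) × (Fin k → Fin d)) → ℂ)
    (hv : GH.mulVec v = v) :
    Gμ.mulVec v = v := by
  let ρ := (tensorPowKKHom d k).comp (unitaryGroup (Fin d) ℂ).subtype
  have hρ : Continuous ρ := (continuous_tensorPowKK d k).comp continuous_subtype_val
  have hfix : ∀ U, ρ U *ᵥ v = v := mulVec_eq_self_of_integral_mulVec_eq_self ρ hρ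
    (by rw [← mulVec_eq_integral_mulVec hρ hGH, hv])
  rw [mulVec_eq_integral_mulVec hρ hGμ, integral_congr_ae (ae_of_all _ hfix), integral_const,
    probReal_univ, one_smul]

/-- Every fixed vector of the Haar moment operator `G_H` is a fixed vector of `G_μ`
for any Borel probability measure `μ` on the unitary group. -/
theorem fixed_points_haar_subset_fixed_points (d k : ℕ) (hd : 1 ≤ d) (hk : 1 ≤ k)
    [MeasurableSpace (Matrix.unitaryGroup (Fin d) ℂ)]
    [BorelSpace (Matrix.unitaryGroup (Fin d) ℂ)]
    (μH μ : Measure (Matrix.unitaryGroup (Fin d) ℂ))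
    [μH.IsHaarMeasure] [IsProbabilityMeasure μH] [IsProbabilityMeasure μ]
    (GH Gμ : Matrix ((Fin k → Fin d) × (Fin k → Fin d))
      ((Fin k → Fin d) × (Fin k → Fin d)) ℂ)
    (hGH : ∀ a b, GH a b =
      ∫ U : Matrix.unitaryGroup (Fin d) ℂ,
        tensorPowKK d k (U : Matrix (Fin d) (Fin d) ℂ) a b ∂μH)
    (hGμ : ∀ a b, Gμ a b =
      ∫ U : Matrix.unitaryGroup (Fin d) ℂ,
        tensorPowKK d k (U : Matrix (Fin d) (Fin d) ℂ) a b ∂μ)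
    (v : ((Fin k → Fin d) × (Fin k → Fin d)) → ℂ)
    (hv : GH.mulVec v = v) :
    Gμ.mulVec v = v :=
  fixed_points_haar_subset_fixed_points_general d k μH μ GH Gμ hGH hGμ v hv
end

section
/- Let n ≥ 0 and let Π be a partition of the n-element set Fin n (a Finpartition of the full finset), with the refinement partial order in which Π ≤ Π′ means every block of Π is contained in a block of Π′. Then for every natural number N, N^{|Π|} = Σ_{Π′ ≥ Π} N·(N−1)⋯(N−|Π′|+1), i.e. N raised to the number of blocks of Π equals the sum, over all partitions Π′ coarser than or equal to Π, of the falling factorial (N)_{|Π′|} = N.descFactorial |Π′|. -/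
/-!
Both sides count the maps `g : α → β` constant on the blocks of `P`, i.e. with `P ≤ ker g`.
Such a map is the same as a map on the blocks of `P`, giving `|β| ^ |P|`. Grouping the maps
by their kernel partition `Q ≥ P` instead, those with kernel exactly `Q` are the injective maps
on the blocks of `Q`, and there are `|β|.descFactorial |Q|` of them.
-/

open Finset

namespace Finpartition

variable {α β : Type*} [Fintype α] [DecidableEq α]

lemma le_iff_part_subset_part {P Q : Finpartition (univ : Finset α)} :
    P ≤ Q ↔ ∀ x, P.part x ⊆ Q.part x := by
  refine ⟨fun h x => ?_, fun h b hb => ?_⟩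
  · obtain ⟨c, hc, hsub⟩ := h (P.part_mem.2 (mem_univ x))
    rwa [Q.part_eq_of_mem hc (hsub (P.mem_part_self.2 (mem_univ x)))]
  · obtain ⟨x, hx⟩ := P.nonempty_of_mem_parts hb
    exact ⟨Q.part x, Q.part_mem.2 (mem_univ x), P.part_eq_of_mem hb hx ▸ h x⟩

lemma ext_part {P Q : Finpartition (univ : Finset α)} (h : ∀ x, P.part x = Q.part x) :
    P = Q :=
  le_antisymm (le_iff_part_subset_part.2 fun x => (h x).subset)
    (le_iff_part_subset_part.2 fun x => (h x).symm.subset)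

variable [DecidableEq β]

noncomputable def ker (g : α → β) : Finpartition (univ : Finset α) :=
  ofSetoid (Setoid.ker g)

lemma mem_part_ker {g : α → β} {x y : α} : y ∈ (ker g).part x ↔ g x = g y :=
  mem_part_ofSetoid_iff_rel

lemma ker_eq_iff {g : α → β} {Q : Finpartition (univ : Finset α)} :
    ker g = Q ↔ ∀ x y, g x = g y ↔ y ∈ Q.part x := by
  refine ⟨fun h x y => h ▸ mem_part_ker.symm, fun h => ext_part fun x => ?_⟩
  ext y
  rw [mem_part_ker, h]

def toParts (P : Finpartition (univ : Finset α)) (x : α) : P.parts :=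
  ⟨P.part x, P.part_mem.2 (mem_univ x)⟩

lemma toParts_surjective (P : Finpartition (univ : Finset α)) :
    Function.Surjective P.toParts := by
  rintro ⟨b, hb⟩
  obtain ⟨x, hx⟩ := P.nonempty_of_mem_parts hb
  exact ⟨x, Subtype.ext (P.part_eq_of_mem hb hx)⟩

lemma toParts_eq_toParts_iff {P : Finpartition (univ : Finset α)} {x y : α} :
    P.toParts x = P.toParts y ↔ y ∈ P.part x := by
  rw [P.mem_part_iff_part_eq_part (mem_univ y) (mem_univ x), eq_comm, toParts, toParts,
    Subtype.mk.injEq]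

lemma le_ker_iff_factorsThrough {P : Finpartition (univ : Finset α)} {g : α → β} :
    P ≤ ker g ↔ g.FactorsThrough P.toParts := by
  simp only [le_iff_part_subset_part, Function.FactorsThrough, toParts_eq_toParts_iff,
    subset_iff, mem_part_ker]

lemma exists_comp_toParts_eq_iff {P : Finpartition (univ : Finset α)} {g : α → β} :
    (∃ h : P.parts → β, h ∘ P.toParts = g) ↔ P ≤ ker g := by
  rw [le_ker_iff_factorsThrough]
  refine ⟨?_, fun hg => ⟨g ∘ Function.surjInv P.toParts_surjective, funext fun x => ?_⟩⟩
  · rintro ⟨h, rfl⟩ x y hxy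
    exact congrArg h hxy
  · exact hg (Function.surjInv_eq P.toParts_surjective (P.toParts x))

lemma ker_comp_toParts_eq_iff {P : Finpartition (univ : Finset α)} {h : P.parts → β} :
    ker (h ∘ P.toParts) = P ↔ Function.Injective h := by
  simp only [ker_eq_iff, Function.comp_apply, ← toParts_eq_toParts_iff]
  refine ⟨fun H a b hab => ?_, fun hinj x y => hinj.eq_iff⟩
  obtain ⟨x, rfl⟩ := P.toParts_surjective a
  obtain ⟨y, rfl⟩ := P.toParts_surjective b
  exact (H x y).1 hab

variable [Fintype β]

def compToParts (P : Finpartition (univ : Finset α)) : (P.parts → β) ↪ (α → β) :=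
  ⟨(· ∘ P.toParts), P.toParts_surjective.injective_comp_right⟩

open scoped Classical in
lemma card_filter_le_ker (P : Finpartition (univ : Finset α)) :
    #{g : α → β | P ≤ ker g} = Fintype.card β ^ #P.parts := by
  have : ({g : α → β | P ≤ ker g} : Finset _) = univ.map P.compToParts := by
    ext g
    simp [compToParts, exists_comp_toParts_eq_iff]
  rw [this, card_map, card_univ, Fintype.card_fun, Fintype.card_coe]

open scoped Classical in
lemma card_filter_ker_eq (Q : Finpartition (univ : Finset α)) :
    #{g : α → β | ker g = Q} = (Fintype.card β).descFactorial #Q.parts := by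
  have : ({g : α → β | ker g = Q} : Finset _) =
      ({h | Function.Injective h} : Finset _).map Q.compToParts := by
    ext g
    simp only [mem_filter, mem_univ, true_and, mem_map, compToParts, Function.Embedding.coeFn_mk]
    refine ⟨fun hg => ?_, fun ⟨h, hinj, hg⟩ => hg ▸ ker_comp_toParts_eq_iff.2 hinj⟩
    obtain ⟨h, rfl⟩ := exists_comp_toParts_eq_iff.2 hg.ge
    exact ⟨h, ker_comp_toParts_eq_iff.1 hg, rfl⟩
  rw [this, card_map, ← Fintype.card_subtype,
    Fintype.card_congr (Equiv.subtypeInjectiveEquivEmbedding _ _), Fintype.card_embedding_eq,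
    Fintype.card_coe]

end Finpartition

open scoped Classical in
theorem Finpartition.pow_card_parts_eq_sum_descFactorial {α β : Type*} [Fintype α] [DecidableEq α]
    [Fintype β] (P : Finpartition (univ : Finset α)) :
    Fintype.card β ^ #P.parts
      = ∑ Q ∈ univ.filter (P ≤ ·), (Fintype.card β).descFactorial #Q.parts := by
  rw [← card_filter_le_ker (β := β), card_eq_sum_card_fiberwise (f := ker)
    (t := univ.filter (P ≤ ·)) fun g hg => by simpa using hg]
  refine sum_congr rfl fun Q hQ => ?_
  rw [filter_filter, ← card_filter_ker_eq]
  congr 1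
  exact filter_congr fun g _ => and_iff_right_of_imp fun hg => hg ▸ (mem_filter.1 hQ).2

open scoped Classical in
/-- `N^{|Π|} = ∑_{Π' ≥ Π} (N)_{|Π'|}`: the power equals the sum over coarser partitions
of falling factorials. -/
theorem pow_card_eq_sum_descFactorial (n : ℕ)
    (P : Finpartition (Finset.univ : Finset (Fin n))) (N : ℕ) :
    N ^ P.parts.card
      = ∑ P' ∈ Finset.univ.filter
          (fun P' : Finpartition (Finset.univ : Finset (Fin n)) => P ≤ P'),
          N.descFactorial P'.parts.card := by
  simpa using P.pow_card_parts_eq_sum_descFactorial (β := Fin N)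
end

section
/- Let k ≥ 1 and let Π₁, Π₂ be partitions of the set Fin (2k). Say a tuple m : Fin (2k) → ℤ respects a partition Π if m is constant on every block of Π. Define the bilinear form m·n = Σ_{i < k} m(i)·n(i) − Σ_{k ≤ i < 2k} m(i)·n(i). Then the following are equivalent: (a) m·n = 0 for every m respecting Π₁ and every n respecting Π₂; (b) there exists a permutation π of Fin k such that for every i < k, the indices i and k + π(i) lie in a common block of Π₁, and i and k + π(i) lie in a common block of Π₂ (i.e. Π₁ ≥ P(π) and Π₂ ≥ P(π), where P(π) is the perfect-matching partition {{i, k+π(i)} : i < k}). -/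
/-- The embedding of `i < k` as the index `i` of `Fin (2k)`. -/
def firstHalf (k : ℕ) (i : Fin k) : Fin (2 * k) :=
  ⟨i.val, by have := i.isLt; omega⟩

/-- The embedding of `i < k` as the index `k + i` of `Fin (2k)`. -/
def secondHalf (k : ℕ) (i : Fin k) : Fin (2 * k) :=
  ⟨k + i.val, by have := i.isLt; omega⟩

/-- A tuple `m` respects a partition `P` if it is constant on every block of `P`. -/
def RespectsPartition (k : ℕ) (P : Finpartition (Finset.univ : Finset (Fin (2 * k))))
    (m : Fin (2 * k) → ℤ) : Prop :=
  ∀ b ∈ P.parts, ∀ i ∈ b, ∀ j ∈ b, m i = m j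

/-- The signed bilinear form `m·n = ∑_{i<k} mᵢnᵢ − ∑_{k≤i<2k} mᵢnᵢ`. -/
def signedDot (k : ℕ) (m n : Fin (2 * k) → ℤ) : ℤ :=
  ∑ i : Fin (2 * k), if (i : ℕ) < k then m i * n i else -(m i * n i)

/-!
If all respecting pairs are orthogonal, test with `m`, `n` the indicators of a block `B₁`
of `Π₁` and a block `B₂` of `Π₂`: then `B₁ ∩ B₂` meets both halves of `Fin (2k)` in equally
many points, and matching the two halves inside each such intersection gives `π`. Conversely,
`π` pairs each term of the first half of `m·n` with an equal term of the second half.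
-/

open Finset

lemma Finpartition.exists_mem_parts_and_mem_iff_part_eq {α : Type*} [Fintype α] [DecidableEq α]
    (P : Finpartition (univ : Finset α)) {a b : α} :
    (∃ p ∈ P.parts, a ∈ p ∧ b ∈ p) ↔ P.part a = P.part b := by
  rw [← P.mem_part_iff_exists, P.mem_part_iff_part_eq_part (mem_univ a) (mem_univ b)]

lemma exists_equiv_comp_eq_of_card_fiber_eq {α β γ : Type*} [Fintype α] [Fintype β]
    [DecidableEq γ] (f : α → γ) (g : β → γ) (h : ∀ c, #{a | f a = c} = #{b | g b = c}) :
    ∃ e : α ≃ β, ∀ a, g (e a) = f a := by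
  have hfib (c : γ) : Fintype.card {a // f a = c} = Fintype.card {b // g b = c} := by
    simpa only [Fintype.card_subtype] using h c
  refine ⟨(Equiv.sigmaFiberEquiv f).symm.trans
    ((Equiv.sigmaCongrRight fun c => Fintype.equivOfCardEq (hfib c)).trans
      (Equiv.sigmaFiberEquiv g)), fun a => ?_⟩
  exact (Fintype.equivOfCardEq (hfib (f a)) ⟨a, rfl⟩).2

section
variable {k : ℕ}

lemma respectsPartition_iff_part_eq {P : Finpartition (univ : Finset (Fin (2 * k)))}
    {m : Fin (2 * k) → ℤ} :
    RespectsPartition k P m ↔ ∀ i j, P.part i = P.part j → m i = m j := by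
  simp only [RespectsPartition, ← P.exists_mem_parts_and_mem_iff_part_eq]
  grind

lemma respectsPartition_boole_part_eq (P : Finpartition (univ : Finset (Fin (2 * k))))
    (b : Finset (Fin (2 * k))) :
    RespectsPartition k P fun x => if P.part x = b then 1 else 0 :=
  respectsPartition_iff_part_eq.2 fun i j hij => by rw [hij]

lemma signedDot_eq_sub (m n : Fin (2 * k) → ℤ) :
    signedDot k m n = ∑ i, m (firstHalf k i) * n (firstHalf k i)
      - ∑ i, m (secondHalf k i) * n (secondHalf k i) := by
  rw [signedDot, ← (finSumFinEquiv.trans (finCongr (two_mul k).symm)).sum_comp,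
    Fintype.sum_sum_type, sub_eq_add_neg, ← sum_neg_distrib]
  congr 1 <;> refine sum_congr rfl fun i _ => ?_
  · exact if_pos i.isLt
  · exact if_neg (Nat.le_add_right k i).not_gt

lemma signedDot_boole_boole (p q : Fin (2 * k) → Prop) [DecidablePred p] [DecidablePred q] :
    signedDot k (fun x => if p x then 1 else 0) (fun x => if q x then 1 else 0) =
      #{i | p (firstHalf k i) ∧ q (firstHalf k i)}
        - #{i | p (secondHalf k i) ∧ q (secondHalf k i)} := by
  simp only [signedDot_eq_sub, boole_mul, ← ite_and, sum_boole]

end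

theorem signedDot_eq_zero_iff_perm_general (k : ℕ)
    (P₁ P₂ : Finpartition (Finset.univ : Finset (Fin (2 * k)))) :
    (∀ m n : Fin (2 * k) → ℤ,
        RespectsPartition k P₁ m → RespectsPartition k P₂ n → signedDot k m n = 0)
      ↔ ∃ π : Equiv.Perm (Fin k),
          (∀ i : Fin k, ∃ b ∈ P₁.parts, firstHalf k i ∈ b ∧ secondHalf k (π i) ∈ b) ∧
          (∀ i : Fin k, ∃ b ∈ P₂.parts, firstHalf k i ∈ b ∧ secondHalf k (π i) ∈ b) := by
  simp only [Finpartition.exists_mem_parts_and_mem_iff_part_eq]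
  constructor
  · intro H
    let block x := (P₁.part x, P₂.part x)
    have hcard (v) : #{i | block (firstHalf k i) = v} = #{i | block (secondHalf k i) = v} := by
      have := H _ _ (respectsPartition_boole_part_eq P₁ v.1)
        (respectsPartition_boole_part_eq P₂ v.2)
      rw [signedDot_boole_boole, sub_eq_zero, Nat.cast_inj] at this
      simpa only [block, Prod.ext_iff] using this
    obtain ⟨π, hπ⟩ := exists_equiv_comp_eq_of_card_fiber_eq _ _ hcard
    exact ⟨π, fun i => (congrArg Prod.fst (hπ i)).symm,
      fun i => (congrArg Prod.snd (hπ i)).symm⟩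
  · rintro ⟨π, h₁, h₂⟩ m n hm hn
    rw [signedDot_eq_sub, sub_eq_zero,
      ← Equiv.sum_comp π fun j => m (secondHalf k j) * n (secondHalf k j)]
    refine sum_congr rfl fun i _ => ?_
    rw [respectsPartition_iff_part_eq.1 hm _ _ (h₁ i),
      respectsPartition_iff_part_eq.1 hn _ _ (h₂ i)]

/-- `m·n = 0` for all `m` respecting `Π₁` and `n` respecting `Π₂` iff there is a
permutation `π` of `Fin k` with `Π₁, Π₂ ≥ P(π)`, i.e. `i` and `k + π(i)` share a
block in both partitions. -/
theorem signedDot_eq_zero_iff_perm (k : ℕ) (hk : 1 ≤ k)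
    (P₁ P₂ : Finpartition (Finset.univ : Finset (Fin (2 * k)))) :
    (∀ m n : Fin (2 * k) → ℤ,
        RespectsPartition k P₁ m → RespectsPartition k P₂ n → signedDot k m n = 0)
      ↔ ∃ π : Equiv.Perm (Fin k),
          (∀ i : Fin k, ∃ b ∈ P₁.parts, firstHalf k i ∈ b ∧ secondHalf k (π i) ∈ b) ∧
          (∀ i : Fin k, ∃ b ∈ P₂.parts, firstHalf k i ∈ b ∧ secondHalf k (π i) ∈ b) :=
  signedDot_eq_zero_iff_perm_general k P₁ P₂
end

section
/- Fix an integer n ≥ 2 and define the Markov transition matrix P on the state space {1, 2, …, n} by: P(x, x−1) = 2x(x−1)/(5n(n−1)) for 2 ≤ x ≤ n, P(x, x+1) = 6x(n−x)/(5n(n−1)) for 1 ≤ x ≤ n−1, P(x, x) = 1 − 2x(3n−2x−1)/(5n(n−1)) for 1 ≤ x ≤ n, and P(x, y) = 0 whenever |x − y| ≥ 2. Then the probability vector π₀(x) = 3^x · C(n, x) / (4^n − 1) is a stationary distribution of P: π₀ sums to 1 over x ∈ {1, …, n}, and Σ_{x=1}^n π₀(x) · P(x, y) = π₀(y) for every y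 ∈ {1, …, n}. -/
/-!
The distribution is reversible: across an edge `x ↔ x + 1` detailed balance
`π₀(x) P(x, x+1) = π₀(x+1) P(x+1, x)` reduces to `C(n, x) (n - x) = C(n, x+1) (x + 1)`, and a
reversible distribution of a row-stochastic matrix is stationary. The normalisation is the
binomial theorem, `∑_{x ≥ 1} 3^x C(n, x) = 4^n - 1`.
-/

open Finset

theorem sum_mul_eq_of_detailed_balance {ι R : Type*} [CommSemiring R] {s : Finset ι}
    {P : ι → ι → R} {π : ι → R} (hbal : ∀ x ∈ s, ∀ y ∈ s, π x * P x y = π y * P y x)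
    (hrow : ∀ y ∈ s, ∑ x ∈ s, P y x = 1) : ∀ y ∈ s, ∑ x ∈ s, π x * P x y = π y := by
  intro y hy
  calc ∑ x ∈ s, π x * P x y = ∑ x ∈ s, π y * P y x := sum_congr rfl fun x hx ↦ hbal x hx y hy
    _ = π y := by rw [← mul_sum, hrow y hy, mul_one]

theorem detailed_balance_of_tridiagonal {R : Type*} [CommSemiring R] {n : ℕ}
    {P : ℕ → ℕ → R} {π : ℕ → R}
    (hzero : ∀ x y, 1 ≤ x → x ≤ n → 1 ≤ y → y ≤ n → (x + 2 ≤ y ∨ y + 2 ≤ x) → P x y = 0)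
    (hsucc : ∀ x, 1 ≤ x → x + 1 ≤ n → π x * P x (x + 1) = π (x + 1) * P (x + 1) x) :
    ∀ x ∈ Icc 1 n, ∀ y ∈ Icc 1 n, π x * P x y = π y * P y x := by
  intro x hx y hy
  rw [mem_Icc] at hx hy
  rcases (by omega : y = x + 1 ∨ x = y + 1 ∨ x = y ∨ x + 2 ≤ y ∨ y + 2 ≤ x)
    with rfl | rfl | rfl | hfar
  · exact hsucc x hx.1 hy.2
  · exact (hsucc y hy.1 hx.2).symm
  · rfl
  · rw [hzero x y hx.1 hx.2 hy.1 hy.2 hfar, hzero y x hy.1 hy.2 hx.1 hx.2 hfar.symm,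
      mul_zero, mul_zero]

theorem sum_Icc_eq_of_tridiagonal {R : Type*} [AddCommMonoid R] {n y : ℕ} (f : ℕ → R)
    (hy : y ∈ Icc 1 n) (hf : ∀ x ∈ Icc 1 n, x + 2 ≤ y ∨ y + 2 ≤ x → f x = 0) :
    ∑ x ∈ Icc 1 n, f x =
      (if 2 ≤ y then f (y - 1) else 0) + f y + (if y < n then f (y + 1) else 0) := by
  rw [mem_Icc] at hy
  rw [← sum_subset (s₁ := Icc (max 1 (y - 1)) (min n (y + 1)))]
  · by_cases h1 : 2 ≤ y <;> by_cases h2 : y < n <;>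
      simp only [h1, h2, if_true, if_false, zero_add, add_zero]
    · rw [show Icc (max 1 (y - 1)) (min n (y + 1)) = {y - 1, y, y + 1} by ext; simp; omega,
        sum_insert (by simp; omega), sum_insert (by simp), sum_singleton, add_assoc]
    · rw [show Icc (max 1 (y - 1)) (min n (y + 1)) = {y - 1, y} by ext; simp; omega,
        sum_insert (by simp; omega), sum_singleton]
    · rw [show Icc (max 1 (y - 1)) (min n (y + 1)) = {y, y + 1} by ext; simp; omega,
        sum_insert (by simp), sum_singleton]
    · rw [show Icc (max 1 (y - 1)) (min n (y + 1)) = {y} by ext; simp; omega, sum_singleton]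
  · intro x
    simp only [mem_Icc]
    omega
  · intro x hx hx'
    simp only [mem_Icc] at hx hx'
    exact hf x (mem_Icc.2 hx) (by omega)

theorem sum_Icc_one_pow_mul_choose {R : Type*} [CommRing R] (a : R) (n : ℕ) :
    ∑ k ∈ Icc 1 n, a ^ k * n.choose k = (a + 1) ^ n - 1 := by
  rw [add_pow, Nat.range_succ_eq_Icc_zero, Icc_eq_cons_Ioc n.zero_le, sum_cons,
    ← Icc_add_one_left_eq_Ioc]
  simp

theorem cast_choose_mul_sub {K : Type*} [CommRing K] {n k : ℕ} (hk : k ≤ n) :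
    (n.choose k : K) * (n - k) = n.choose (k + 1) * (k + 1) := by
  have := congrArg (Nat.cast (R := K)) (Nat.choose_succ_right_eq n k)
  push_cast [Nat.cast_sub hk] at this
  exact this.symm

namespace ZeroChain

theorem row_sum_eq_one {n : ℕ} (hn : 2 ≤ n) {P : ℕ → ℕ → ℝ}
    (hdown : ∀ x, 2 ≤ x → x ≤ n →
      P x (x - 1) = (2 * x * (x - 1) : ℝ) / (5 * n * (n - 1)))
    (hup : ∀ x, 1 ≤ x → x ≤ n - 1 →
      P x (x + 1) = (6 * x * (n - x) : ℝ) / (5 * n * (n - 1)))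
    (hdiag : ∀ x, 1 ≤ x → x ≤ n →
      P x x = 1 - (2 * x * (3 * n - 2 * x - 1) : ℝ) / (5 * n * (n - 1)))
    (hzero : ∀ x y, 1 ≤ x → x ≤ n → 1 ≤ y → y ≤ n →
      (x + 2 ≤ y ∨ y + 2 ≤ x) → P x y = 0) :
    ∀ y ∈ Icc 1 n, ∑ x ∈ Icc 1 n, P y x = 1 := by
  intro y hy
  obtain ⟨hy1, hyn⟩ := mem_Icc.1 hy
  have hD : (5 * n * (n - 1) : ℝ) ≠ 0 := by
    have : (2 : ℝ) ≤ n := by exact_mod_cast hn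
    nlinarith
  -- The off-diagonal formulas vanish at the boundary rows, so every row has the interior shape.
  have hleft : (if 2 ≤ y then P y (y - 1) else 0) = (2 * y * (y - 1) : ℝ) / (5 * n * (n - 1)) := by
    split_ifs with h
    · exact hdown y h hyn
    · obtain rfl : y = 1 := by omega
      simp
  have hright : (if y < n then P y (y + 1) else 0) = (6 * y * (n - y) : ℝ) / (5 * n * (n - 1)) := by
    split_ifs with h
    · exact hup y hy1 (by omega)
    · obtain rfl : y = n := by omega
      simp
  rw [sum_Icc_eq_of_tridiagonal _ hy fun x hx hfar ↦
      hzero y x hy1 hyn (mem_Icc.1 hx).1 (mem_Icc.1 hx).2 hfar.symm,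
    hleft, hright, hdiag y hy1 hyn]
  field_simp
  ring

theorem balance_succ {n : ℕ} {P : ℕ → ℕ → ℝ} {π₀ : ℕ → ℝ}
    (hdown : ∀ x, 2 ≤ x → x ≤ n →
      P x (x - 1) = (2 * x * (x - 1) : ℝ) / (5 * n * (n - 1)))
    (hup : ∀ x, 1 ≤ x → x ≤ n - 1 →
      P x (x + 1) = (6 * x * (n - x) : ℝ) / (5 * n * (n - 1)))
    (hpi : ∀ x, π₀ x = 3 ^ x * (n.choose x : ℝ) / (4 ^ n - 1))
    {x : ℕ} (hx : 1 ≤ x) (hxn : x + 1 ≤ n) :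
    π₀ x * P x (x + 1) = π₀ (x + 1) * P (x + 1) x := by
  rw [hup x hx (by omega), show P (x + 1) x = P (x + 1) (x + 1 - 1) from rfl,
    hdown (x + 1) (by omega) hxn, hpi, hpi]
  push_cast
  linear_combination (6 * x * 3 ^ x / (4 ^ n - 1) / (5 * n * (n - 1)) : ℝ) *
    cast_choose_mul_sub (K := ℝ) (n := n) (k := x) (by omega)

end ZeroChain

/-- The distribution `π₀(x) = 3^x C(n,x)/(4^n − 1)` is stationary for the zero-chain
transition matrix `P` on `{1, …, n}`. -/
theorem zero_chain_stationary (n : ℕ) (hn : 2 ≤ n) (P : ℕ → ℕ → ℝ) (π₀ : ℕ → ℝ)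
    (hdown : ∀ x, 2 ≤ x → x ≤ n →
      P x (x - 1) = (2 * x * (x - 1) : ℝ) / (5 * n * (n - 1)))
    (hup : ∀ x, 1 ≤ x → x ≤ n - 1 →
      P x (x + 1) = (6 * x * (n - x) : ℝ) / (5 * n * (n - 1)))
    (hdiag : ∀ x, 1 ≤ x → x ≤ n →
      P x x = 1 - (2 * x * (3 * n - 2 * x - 1) : ℝ) / (5 * n * (n - 1)))
    (hzero : ∀ x y, 1 ≤ x → x ≤ n → 1 ≤ y → y ≤ n →
      (x + 2 ≤ y ∨ y + 2 ≤ x) → P x y = 0)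
    (hpi : ∀ x, π₀ x = 3 ^ x * (n.choose x : ℝ) / (4 ^ n - 1)) :
    (∑ x ∈ Finset.Icc 1 n, π₀ x = 1) ∧
    ∀ y ∈ Finset.Icc 1 n, ∑ x ∈ Finset.Icc 1 n, π₀ x * P x y = π₀ y := by
  have hnorm : (4 : ℝ) ^ n - 1 ≠ 0 :=
    (sub_pos.2 (one_lt_pow₀ (by norm_num) (by omega))).ne'
  refine ⟨?_, sum_mul_eq_of_detailed_balance ?_
    (ZeroChain.row_sum_eq_one hn hdown hup hdiag hzero)⟩
  · simp only [hpi]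
    rw [← sum_div, sum_Icc_one_pow_mul_choose, div_eq_one_iff_eq hnorm]
    norm_num
  · exact detailed_balance_of_tridiagonal hzero fun x hx hxn ↦
      ZeroChain.balance_succ hdown hup hpi hx hxn
end

section
/- Consider, for each integer n ≥ 2, the zero-chain transition matrix P on {1, …, n} defined by P(x, x−1) = 2x(x−1)/(5n(n−1)), P(x, x+1) = 6x(n−x)/(5n(n−1)), P(x, x) = 1 − 2x(3n−2x−1)/(5n(n−1)), and P(x, y) = 0 for |x−y| ≥ 2, with stationary distribution π₀(x) = 3^x·C(n,x)/(4^n − 1). Then the chain mixes in time O(n log(n/ε)): there exists a universal constant C > 0 such that for every n ≥ 2, every 0 < ε < 1, every probability vector v on {1, …, n}, and every natural number t with t ≥ C · n · log(n/ε), one has (1/2) · Σ_{y=1}^n | (vᵀPᵗ)(y) − π₀(y) | ≤ ε. -/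
/-!
The zero chain is a birth–death chain satisfying detailed balance with respect to `π₀`, so `π₀`
is stationary, and the total variation distance between `vᵀPᵗ` and `π₀ = π₀ᵀPᵗ` is bounded by
half the oscillation of `Pᵗs` over vectors `s` with entries in `[-1, 1]`.

Give `{1, …, n}` the path metric in which the edge between states `x` and `x + 1` has length
`1/(x(x+1))`, i.e. `d(x, y) = |g x - g y|` with `g x = 1 - 1/x`; its diameter is below `1`.
Writing `(Pψ)(x+1) - (Pψ)(x)` as a nonnegative combination of the three increments of `ψ` on
neighbouring edges shows that one step of `P` multiplies the Lipschitz constant of `ψ` for this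
metric by at most `1 - 2/(5n)`. A vector with entries in `[-1, 1]` is `2n²`-Lipschitz, so the
distance after `t` steps is at most `n² (1 - 2/(5n))ᵗ ≤ n² e^{-2t/(5n)}`, which is at most `ε` as
soon as `t ≥ 5 n log(n/ε)`.
-/

/-- The zero-chain transition matrix on `{1, …, n}` (the state of index `i : Fin n`
is `x = i + 1`). -/
noncomputable def zeroChainP (n : ℕ) : Matrix (Fin n) (Fin n) ℝ :=
  Matrix.of fun i j =>
    if (j : ℕ) + 1 = (i : ℕ) then
      (2 * ((i : ℕ) + 1) * (i : ℕ) : ℝ) / (5 * n * (n - 1))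
    else if (j : ℕ) = (i : ℕ) + 1 then
      (6 * ((i : ℕ) + 1) * (n - ((i : ℕ) + 1)) : ℝ) / (5 * n * (n - 1))
    else if j = i then
      1 - (2 * ((i : ℕ) + 1) * (3 * n - 2 * ((i : ℕ) + 1) - 1) : ℝ) / (5 * n * (n - 1))
    else 0

/-- The stationary distribution `π₀(x) = 3^x C(n,x)/(4^n − 1)` of the zero chain. -/
noncomputable def zeroChainPi (n : ℕ) : Fin n → ℝ :=
  fun i => 3 ^ ((i : ℕ) + 1) * (n.choose ((i : ℕ) + 1) : ℝ) / (4 ^ n - 1)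

open Finset Matrix

section Stochastic

variable {ι : Type*} [Fintype ι]

theorem vecMul_eq_self_of_detailed_balance {P : Matrix ι ι ℝ} {π : ι → ℝ}
    (hrow : P *ᵥ 1 = 1) (hrev : ∀ i j, π i * P i j = π j * P j i) : π ᵥ* P = π := by
  funext j
  have hj : ∑ i, P j i = 1 := by simpa [mulVec, dotProduct] using congrFun hrow j
  simp only [vecMul, dotProduct, hrev _ j, ← mul_sum, hj, mul_one]

theorem vecMul_pow_eq_self [DecidableEq ι] {P : Matrix ι ι ℝ} {π : ι → ℝ} (h : π ᵥ* P = π)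
    (t : ℕ) : π ᵥ* (P ^ t) = π := by
  induction t with
  | zero => rw [pow_zero, vecMul_one]
  | succ t ih => rw [pow_succ, ← vecMul_vecMul, ih, h]

theorem dotProduct_sub_dotProduct_le {v w g : ι → ℝ} {K : ℝ} (hv : ∀ i, 0 ≤ v i)
    (hv1 : ∑ i, v i = 1) (hw : ∀ i, 0 ≤ w i) (hw1 : ∑ i, w i = 1) (hg : ∀ x y, g x - g y ≤ K) :
    v ⬝ᵥ g - w ⬝ᵥ g ≤ K :=
  calc v ⬝ᵥ g - w ⬝ᵥ g
      = (∑ x, v x * g x) * ∑ y, w y - (∑ x, v x) * ∑ y, w y * g y := by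
        simp only [dotProduct, hv1, hw1, mul_one, one_mul]
    _ = ∑ x, ∑ y, v x * w y * (g x - g y) := by
        simp only [sum_mul_sum, ← sum_sub_distrib]
        congr! 2 with x _ y _
        ring
    _ ≤ ∑ x, ∑ y, v x * w y * K := by
        gcongr with x _ y _
        · exact mul_nonneg (hv x) (hw y)
        · exact hg x y
    _ = K := by simp only [← sum_mul, ← mul_sum, hw1, hv1, mul_one, one_mul]

theorem sum_abs_vecMul_sub_vecMul_le {M : Matrix ι ι ℝ} {v w : ι → ℝ} {K : ℝ}
    (hv : ∀ i, 0 ≤ v i) (hv1 : ∑ i, v i = 1) (hw : ∀ i, 0 ≤ w i) (hw1 : ∑ i, w i = 1)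
    (hM : ∀ s : ι → ℝ, (∀ i, |s i| ≤ 1) → ∀ x y, (M *ᵥ s) x - (M *ᵥ s) y ≤ K) :
    ∑ y, |(v ᵥ* M) y - (w ᵥ* M) y| ≤ K := by
  set s : ι → ℝ := fun y => SignType.sign ((v ᵥ* M) y - (w ᵥ* M) y)
  have hs : ∀ i, |s i| ≤ 1 := fun i => by
    simp only [s]
    rcases SignType.sign ((v ᵥ* M) i - (w ᵥ* M) i) with _ | _ | _ <;> simp
  calc ∑ y, |(v ᵥ* M) y - (w ᵥ* M) y| = v ⬝ᵥ (M *ᵥ s) - w ⬝ᵥ (M *ᵥ s) := by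
        rw [dotProduct_mulVec, dotProduct_mulVec, ← sub_dotProduct]
        simp only [dotProduct, s, Pi.sub_apply, self_mul_sign]
    _ ≤ K := dotProduct_sub_dotProduct_le hv hv1 hw hw1 (hM s hs)

end Stochastic

section BirthDeath

variable {n : ℕ}

theorem extend_val_of_lt (ψ : Fin n → ℝ) {k : ℕ} (hk : k < n) :
    Function.extend Fin.val ψ 0 k = ψ ⟨k, hk⟩ :=
  Fin.val_injective.extend_apply ψ 0 ⟨k, hk⟩

theorem extend_val_of_le (ψ : Fin n → ℝ) {k : ℕ} (hk : n ≤ k) :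
    Function.extend Fin.val ψ 0 k = 0 :=
  Function.extend_apply' _ _ _ (by rintro ⟨j, rfl⟩; exact absurd j.isLt (by omega))

theorem sum_ite_val_eq_extend (k : ℕ) (ψ : Fin n → ℝ) :
    ∑ j : Fin n, (if (j : ℕ) = k then ψ j else 0) = Function.extend Fin.val ψ 0 k := by
  by_cases hk : k < n
  · obtain ⟨k, rfl⟩ : ∃ i : Fin n, (i : ℕ) = k := ⟨⟨k, hk⟩, rfl⟩
    simp only [Fin.val_injective.extend_apply, Fin.val_inj, sum_ite_eq', mem_univ, if_true]
  · rw [extend_val_of_le ψ (not_lt.mp hk)]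
    exact sum_eq_zero fun j _ => if_neg (by rintro rfl; exact hk j.isLt)

def birthDeathMatrix (n : ℕ) (d u : ℕ → ℝ) : Matrix (Fin n) (Fin n) ℝ :=
  Matrix.of fun i j =>
    if (j : ℕ) + 1 = i then d i
    else if (j : ℕ) = i + 1 then u i
    else if j = i then 1 - d i - u i
    else 0

variable {d u : ℕ → ℝ}

/- `Function.extend Fin.val ψ 0` is `ψ` padded with zeros; at `i = 0` the truncated `i - 1` is
harmless because `d 0 = 0`. -/
theorem birthDeathMatrix_mulVec_apply (hd0 : d 0 = 0) (ψ : Fin n → ℝ) (i : Fin n) :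
    (birthDeathMatrix n d u *ᵥ ψ) i =
      d i * Function.extend Fin.val ψ 0 (i - 1) + (1 - d i - u i) * ψ i +
        u i * Function.extend Fin.val ψ 0 (i + 1) := by
  have hdown : d i * Function.extend Fin.val ψ 0 (i - 1) =
      ∑ j : Fin n, if (j : ℕ) + 1 = i then d i * ψ j else 0 := by
    rcases Nat.eq_zero_or_pos i with h | h
    · simp [h, hd0]
    · simp only [← sum_ite_val_eq_extend, mul_sum, mul_ite, mul_zero]
      exact sum_congr rfl fun j _ => if_congr (by omega) rfl rfl
  rw [hdown, ← Fin.val_injective.extend_apply ψ 0 i]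
  simp only [mulVec, dotProduct, ← sum_ite_val_eq_extend, mul_sum, mul_ite, mul_zero,
    ← sum_add_distrib]
  refine sum_congr rfl fun j _ => ?_
  simp only [birthDeathMatrix, of_apply, Fin.ext_iff]
  split_ifs <;> first | omega | ring

theorem birthDeathMatrix_mulVec_extend (hd0 : d 0 = 0) (ψ : Fin n → ℝ) {k : ℕ} (hk : k < n) :
    Function.extend Fin.val (birthDeathMatrix n d u *ᵥ ψ) 0 k =
      d k * Function.extend Fin.val ψ 0 (k - 1) + (1 - d k - u k) * Function.extend Fin.val ψ 0 k +
        u k * Function.extend Fin.val ψ 0 (k + 1) := by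
  rw [extend_val_of_lt _ hk, extend_val_of_lt _ hk, birthDeathMatrix_mulVec_apply hd0]

structure BirthDeathRates (n : ℕ) (d u : ℕ → ℝ) : Prop where
  down_zero : d 0 = 0
  up_last : u (n - 1) = 0
  down_nonneg : ∀ e < n, 0 ≤ d e
  up_nonneg : ∀ e < n, 0 ≤ u e

theorem BirthDeathRates.mulVec_one (h : BirthDeathRates n d u) :
    birthDeathMatrix n d u *ᵥ 1 = 1 := by
  funext i
  have hup : u i * Function.extend Fin.val (1 : Fin n → ℝ) 0 (i + 1) = u i := by
    by_cases hi : (i : ℕ) + 1 < n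
    · rw [extend_val_of_lt _ hi, Pi.one_apply, mul_one]
    · rw [show (i : ℕ) = n - 1 by omega, h.up_last, zero_mul]
  rw [birthDeathMatrix_mulVec_apply h.down_zero, hup, extend_val_of_lt _ (by omega)]
  simp only [Pi.one_apply]
  ring

theorem BirthDeathRates.vecMul_eq_self (h : BirthDeathRates n d u) {π : Fin n → ℝ}
    (hπ : ∀ i j : Fin n, (j : ℕ) = i + 1 → π i * u i = π j * d j) :
    π ᵥ* birthDeathMatrix n d u = π := by
  refine vecMul_eq_self_of_detailed_balance h.mulVec_one fun i j => ?_
  simp only [birthDeathMatrix, of_apply]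
  split_ifs <;> first
    | omega
    | exact hπ i j ‹_›
    | exact (hπ j i ‹_›).symm
    | (subst_vars; rfl)
    | simp only [mul_zero]

def PathLipschitz (n : ℕ) (g : ℕ → ℝ) (c : ℝ) (f : ℕ → ℝ) : Prop :=
  ∀ e, e + 1 < n → |f (e + 1) - f e| ≤ c * (g (e + 1) - g e)

theorem PathLipschitz.abs_sub_le {g f : ℕ → ℝ} {c : ℝ} (h : PathLipschitz n g c f) {x y : ℕ}
    (hxy : x ≤ y) (hy : y < n) : |f y - f x| ≤ c * (g y - g x) := by
  induction y, hxy using Nat.le_induction with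
  | base => simp
  | succ y hxy ih =>
    calc |f (y + 1) - f x| ≤ |f (y + 1) - f y| + |f y - f x| := _root_.abs_sub_le _ _ _
      _ ≤ c * (g (y + 1) - g y) + c * (g y - g x) := add_le_add (h y hy) (ih (by omega))
      _ = c * (g (y + 1) - g x) := by ring

theorem PathLipschitz.birthDeathMatrix_mulVec {g : ℕ → ℝ} {c lam : ℝ} {ψ : Fin n → ℝ}
    (hdu : BirthDeathRates n d u) (hmid : ∀ e, e + 1 < n → d (e + 1) + u e ≤ 1)
    (hlam : ∀ e, e + 1 < n →
      d e * (g e - g (e - 1)) + (1 - d (e + 1) - u e) * (g (e + 1) - g e) +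
        u (e + 1) * (g (e + 2) - g (e + 1)) ≤ lam * (g (e + 1) - g e))
    (hc : 0 ≤ c) (h : PathLipschitz n g c (Function.extend Fin.val ψ 0)) :
    PathLipschitz n g (lam * c) (Function.extend Fin.val (birthDeathMatrix n d u *ᵥ ψ) 0) := by
  intro e he
  rw [birthDeathMatrix_mulVec_extend hdu.down_zero ψ he,
    birthDeathMatrix_mulVec_extend hdu.down_zero ψ (by omega : e < n), Nat.add_sub_cancel]
  set f := Function.extend Fin.val ψ 0
  have scale : ∀ {a x w : ℝ}, 0 ≤ a → |x| ≤ c * w → |a * x| ≤ a * (c * w) := fun ha hx => by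
    rw [abs_mul, abs_of_nonneg ha]
    exact mul_le_mul_of_nonneg_left hx ha
  have hdown : |d e * (f e - f (e - 1))| ≤ d e * (c * (g e - g (e - 1))) := by
    rcases Nat.eq_zero_or_pos e with rfl | he0
    · simp [hdu.down_zero]
    · obtain ⟨k, rfl⟩ : ∃ k, e = k + 1 := ⟨e - 1, by omega⟩
      exact scale (hdu.down_nonneg _ (by omega)) (h k (by omega))
  have hstay : |(1 - d (e + 1) - u e) * (f (e + 1) - f e)| ≤
      (1 - d (e + 1) - u e) * (c * (g (e + 1) - g e)) :=
    scale (by linarith [hmid e he]) (h e he)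
  have hup : |u (e + 1) * (f (e + 2) - f (e + 1))| ≤ u (e + 1) * (c * (g (e + 2) - g (e + 1))) := by
    by_cases he2 : e + 2 < n
    · exact scale (hdu.up_nonneg _ he) (h (e + 1) he2)
    · simp [show e + 1 = n - 1 by omega, hdu.up_last]
  calc _ = |d e * (f e - f (e - 1)) + (1 - d (e + 1) - u e) * (f (e + 1) - f e) +
          u (e + 1) * (f (e + 2) - f (e + 1))| := by congr 1; ring
    _ ≤ c * (d e * (g e - g (e - 1)) + (1 - d (e + 1) - u e) * (g (e + 1) - g e) +
          u (e + 1) * (g (e + 2) - g (e + 1))) := by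
        refine (abs_add_three _ _ _).trans ?_
        linarith
    _ ≤ lam * c * (g (e + 1) - g e) := by
        nlinarith [mul_le_mul_of_nonneg_left (hlam e he) hc]

theorem PathLipschitz.birthDeathMatrix_pow_mulVec {g : ℕ → ℝ} {c lam : ℝ} {ψ : Fin n → ℝ}
    (hdu : BirthDeathRates n d u) (hmid : ∀ e, e + 1 < n → d (e + 1) + u e ≤ 1)
    (hlam : ∀ e, e + 1 < n →
      d e * (g e - g (e - 1)) + (1 - d (e + 1) - u e) * (g (e + 1) - g e) +
        u (e + 1) * (g (e + 2) - g (e + 1)) ≤ lam * (g (e + 1) - g e))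
    (hlam0 : 0 ≤ lam) (hc : 0 ≤ c) (h : PathLipschitz n g c (Function.extend Fin.val ψ 0))
    (t : ℕ) :
    PathLipschitz n g (lam ^ t * c)
      (Function.extend Fin.val (birthDeathMatrix n d u ^ t *ᵥ ψ) 0) := by
  induction t with
  | zero => simpa using h
  | succ t ih =>
    rw [pow_succ' lam, pow_succ' (birthDeathMatrix n d u), ← mulVec_mulVec, mul_assoc]
    exact ih.birthDeathMatrix_mulVec hdu hmid hlam (by positivity)

theorem PathLipschitz.sub_le {g f : ℕ → ℝ} {c B : ℝ} (h : PathLipschitz n g c f) (hc : 0 ≤ c)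
    (hB : ∀ x y, g x - g y ≤ B) {x y : ℕ} (hx : x < n) (hy : y < n) : f x - f y ≤ c * B := by
  rcases le_total x y with hxy | hxy
  · calc f x - f y ≤ |f y - f x| := by rw [abs_sub_comm]; exact le_abs_self _
      _ ≤ c * (g y - g x) := h.abs_sub_le hxy hy
      _ ≤ c * B := mul_le_mul_of_nonneg_left (hB y x) hc
  · calc f x - f y ≤ |f x - f y| := le_abs_self _
      _ ≤ c * (g x - g y) := h.abs_sub_le hxy hx
      _ ≤ c * B := mul_le_mul_of_nonneg_left (hB x y) hc

end BirthDeath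

theorem pow_mul_le_of_log_div_le {lam r K ε : ℝ} {t : ℕ} (hlam0 : 0 ≤ lam) (hlam : lam ≤ 1 - r)
    (hK : 0 < K) (hε : 0 < ε) (ht : Real.log (K / ε) ≤ r * t) : lam ^ t * K ≤ ε := by
  have hexp : lam ^ t ≤ Real.exp (-(r * t)) :=
    calc lam ^ t ≤ Real.exp (-r) ^ t :=
          pow_le_pow_left₀ hlam0 (by linarith [Real.add_one_le_exp (-r)]) t
      _ = Real.exp (-(r * t)) := by rw [← Real.exp_nat_mul]; ring_nf
  calc lam ^ t * K ≤ Real.exp (-Real.log (K / ε)) * K := by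
        gcongr
        exact hexp.trans (Real.exp_le_exp.mpr (by linarith))
    _ = ε := by
        rw [Real.exp_neg, Real.exp_log (by positivity)]
        field_simp

section ZeroChain

variable {n : ℕ}

noncomputable def zeroChainDown (n x : ℕ) : ℝ := 2 * (x + 1) * x / (5 * n * (n - 1))

noncomputable def zeroChainUp (n x : ℕ) : ℝ := 6 * (x + 1) * (n - (x + 1)) / (5 * n * (n - 1))

theorem zeroChainP_eq_birthDeathMatrix (n : ℕ) :
    zeroChainP n = birthDeathMatrix n (zeroChainDown n) (zeroChainUp n) := by
  ext i j
  simp only [zeroChainP, birthDeathMatrix, of_apply, zeroChainDown, zeroChainUp]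
  split_ifs <;> first | rfl | ring

theorem five_mul_mul_sub_one_pos (hn : 2 ≤ n) : 0 < 5 * (n : ℝ) * (n - 1) := by
  have : (2 : ℝ) ≤ n := by exact_mod_cast hn
  nlinarith

theorem zeroChain_birthDeathRates (hn : 2 ≤ n) :
    BirthDeathRates n (zeroChainDown n) (zeroChainUp n) := by
  have hD := five_mul_mul_sub_one_pos hn
  refine ⟨by simp [zeroChainDown], ?_, fun e _ => by unfold zeroChainDown; positivity,
    fun e he => div_nonneg ?_ hD.le⟩
  · rw [zeroChainUp, Nat.cast_sub (by omega), Nat.cast_one, sub_add_cancel, sub_self, mul_zero,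
      zero_div]
  · have : (e : ℝ) + 1 ≤ n := by exact_mod_cast he
    have : (0 : ℝ) ≤ n - (e + 1) := by linarith
    positivity

theorem zeroChainDown_succ_add_zeroChainUp_le (hn : 2 ≤ n) {e : ℕ} (he : e + 1 < n) :
    zeroChainDown n (e + 1) + zeroChainUp n e ≤ 1 := by
  have hD := five_mul_mul_sub_one_pos hn
  have hen : (e : ℝ) + 2 ≤ n := by exact_mod_cast he
  rw [zeroChainDown, zeroChainUp, ← add_div, div_le_one hD]
  push_cast
  nlinarith [mul_nonneg (e.cast_nonneg : (0 : ℝ) ≤ e) (sub_nonneg.mpr hen)]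

theorem zeroChainPi_detailed_balance (i j : Fin n) (hij : (j : ℕ) = i + 1) :
    zeroChainPi n i * zeroChainUp n i = zeroChainPi n j * zeroChainDown n j := by
  have hchoose : (n.choose (i + 2) : ℝ) * ((i : ℝ) + 2) = n.choose (i + 1) * (n - (i + 1)) := by
    have h := congrArg (Nat.cast : ℕ → ℝ) (Nat.choose_succ_right_eq n (i + 1))
    push_cast [Nat.cast_sub (show (i : ℕ) + 1 ≤ n by omega)] at h
    linarith
  simp only [zeroChainPi, zeroChainUp, zeroChainDown, hij, div_mul_div_comm]
  congr 1
  push_cast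
  linear_combination (-(3 : ℝ) ^ ((i : ℕ) + 1) * 6 * ((i : ℝ) + 1)) * hchoose

theorem one_lt_four_pow (hn : 2 ≤ n) : (1 : ℝ) < 4 ^ n := one_lt_pow₀ (by norm_num) (by omega)

theorem zeroChainPi_nonneg (hn : 2 ≤ n) (i : Fin n) : 0 ≤ zeroChainPi n i := by
  have := one_lt_four_pow hn
  exact div_nonneg (by positivity) (by linarith)

theorem sum_zeroChainPi (hn : 2 ≤ n) : ∑ i, zeroChainPi n i = 1 := by
  have h4 : (4 : ℝ) ^ n - 1 ≠ 0 := by linarith [one_lt_four_pow hn]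
  have hbinom : ∑ k ∈ range (n + 1), (3 : ℝ) ^ k * n.choose k = 4 ^ n := by
    simpa [mul_one, one_pow, show (3 : ℝ) + 1 = 4 by norm_num] using (add_pow (3 : ℝ) 1 n).symm
  rw [sum_range_succ', pow_zero, Nat.choose_zero_right, Nat.cast_one, one_mul] at hbinom
  simp only [zeroChainPi, ← sum_div, div_eq_one_iff_eq h4]
  rw [Fin.sum_univ_eq_sum_range (fun k => (3 : ℝ) ^ (k + 1) * n.choose (k + 1))]
  linarith [hbinom]

-- `1 - 1/(x + 1)`: the edge between indices `e` and `e + 1` gets length `1/((e + 1)(e + 2))`.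
noncomputable def zeroChainPotential (x : ℕ) : ℝ := x / (x + 1)

theorem zeroChain_contraction (hn : 2 ≤ n) {e : ℕ} (he : e + 1 < n) :
    zeroChainDown n e * (zeroChainPotential e - zeroChainPotential (e - 1)) +
        (1 - zeroChainDown n (e + 1) - zeroChainUp n e) *
          (zeroChainPotential (e + 1) - zeroChainPotential e) +
        zeroChainUp n (e + 1) * (zeroChainPotential (e + 2) - zeroChainPotential (e + 1)) ≤
      (1 - 2 / (5 * n)) * (zeroChainPotential (e + 1) - zeroChainPotential e) := by
  have hn2 : (2 : ℝ) ≤ n := by exact_mod_cast hn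
  have hn0 : (n : ℝ) ≠ 0 := by positivity
  have hn1 : (n : ℝ) - 1 ≠ 0 := by linarith
  rw [← sub_nonpos]
  rcases e with _ | k
  · calc _ = -4 / (5 * (n : ℝ) * (n - 1)) := by
          simp only [zeroChainDown, zeroChainUp, zeroChainPotential]
          push_cast
          field_simp
          ring
      _ ≤ 0 := div_nonpos_of_nonpos_of_nonneg (by norm_num) (five_mul_mul_sub_one_pos hn).le
  · calc _ = -(4 * (n : ℝ) * (k + 1) + 8 * k + 20) /
          (5 * n * (n - 1) * (k + 2) * (k + 3) * (k + 4)) := by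
          simp only [zeroChainDown, zeroChainUp, zeroChainPotential, Nat.add_sub_cancel]
          push_cast
          field_simp
          ring
      _ ≤ 0 := div_nonpos_of_nonpos_of_nonneg (by nlinarith)
          (by have := five_mul_mul_sub_one_pos hn; positivity)

theorem zeroChainPotential_sub_le_one (x y : ℕ) :
    zeroChainPotential x - zeroChainPotential y ≤ 1 := by
  have hx : zeroChainPotential x ≤ 1 := by
    rw [zeroChainPotential, div_le_one (by positivity)]
    linarith
  have hy : 0 ≤ zeroChainPotential y := by unfold zeroChainPotential; positivity
  linarith

theorem pathLipschitz_zeroChainPotential_of_abs_le_one {s : Fin n → ℝ} (hs : ∀ i, |s i| ≤ 1) :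
    PathLipschitz n zeroChainPotential (2 * n ^ 2) (Function.extend Fin.val s 0) := by
  intro e he
  have hen : (e : ℝ) + 2 ≤ n := by exact_mod_cast he
  have hpot : zeroChainPotential (e + 1) - zeroChainPotential e = 1 / ((e + 1) * (e + 2)) := by
    simp only [zeroChainPotential]
    push_cast
    field_simp
    ring
  rw [extend_val_of_lt s he, extend_val_of_lt s (by omega), hpot, mul_one_div,
    le_div_iff₀ (by positivity)]
  calc |s ⟨e + 1, he⟩ - s ⟨e, by omega⟩| * ((e + 1) * (e + 2))
      ≤ 2 * ((e + 1) * (e + 2)) := by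
        gcongr
        linarith [abs_sub (s ⟨e + 1, he⟩) (s ⟨e, by omega⟩), hs ⟨e + 1, he⟩, hs ⟨e, by omega⟩]
    _ ≤ 2 * n ^ 2 := by nlinarith

theorem one_sub_two_div_five_mul_nonneg (n : ℕ) : (0 : ℝ) ≤ 1 - 2 / (5 * n) := by
  rcases n.eq_zero_or_pos with rfl | hn
  · norm_num
  · have : (1 : ℝ) ≤ n := by exact_mod_cast hn
    rw [sub_nonneg, div_le_one (by positivity)]
    linarith

theorem zeroChainP_pow_mulVec_sub_le (hn : 2 ≤ n) (t : ℕ) {s : Fin n → ℝ}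
    (hs : ∀ i, |s i| ≤ 1) (x y : Fin n) :
    (zeroChainP n ^ t *ᵥ s) x - (zeroChainP n ^ t *ᵥ s) y ≤
      (1 - 2 / (5 * n)) ^ t * (2 * n ^ 2) := by
  have hlam0 := one_sub_two_div_five_mul_nonneg n
  have hlip := (pathLipschitz_zeroChainPotential_of_abs_le_one hs).birthDeathMatrix_pow_mulVec
    (zeroChain_birthDeathRates hn) (fun e he => zeroChainDown_succ_add_zeroChainUp_le hn he)
    (fun e he => zeroChain_contraction hn he) hlam0 (by positivity) t
  have := hlip.sub_le (by positivity) zeroChainPotential_sub_le_one x.isLt y.isLt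
  rwa [Fin.val_injective.extend_apply, Fin.val_injective.extend_apply, mul_one,
    ← zeroChainP_eq_birthDeathMatrix] at this

theorem zeroChainPi_vecMul_pow (hn : 2 ≤ n) (t : ℕ) :
    zeroChainPi n ᵥ* zeroChainP n ^ t = zeroChainPi n := by
  rw [zeroChainP_eq_birthDeathMatrix]
  exact vecMul_pow_eq_self ((zeroChain_birthDeathRates hn).vecMul_eq_self
    zeroChainPi_detailed_balance) t

end ZeroChain

/-- The zero chain mixes in time `O(n log(n/ε))`: there is a universal constant `C`
such that after `t ≥ C n log(n/ε)` steps, the total variation distance to `π₀` is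
at most `ε`, for every starting distribution. -/
theorem zero_chain_mixing :
    ∃ C : ℝ, 0 < C ∧ ∀ n : ℕ, 2 ≤ n → ∀ ε : ℝ, 0 < ε → ε < 1 →
      ∀ v : Fin n → ℝ, (∀ i, 0 ≤ v i) → ∑ i, v i = 1 →
      ∀ t : ℕ, C * n * Real.log (n / ε) ≤ t →
        (1 / 2) * ∑ y, |Matrix.vecMul v (zeroChainP n ^ t) y - zeroChainPi n y| ≤ ε := by
  refine ⟨5, by norm_num, fun n hn ε hε hε1 v hv hv1 t ht => ?_⟩
  have hn0 : (0 : ℝ) < n := by positivity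
  have htv := sum_abs_vecMul_sub_vecMul_le hv hv1 (zeroChainPi_nonneg hn) (sum_zeroChainPi hn)
    (fun s hs => zeroChainP_pow_mulVec_sub_le hn t hs)
  rw [zeroChainPi_vecMul_pow hn] at htv
  have hlog : Real.log (n ^ 2 / ε) ≤ 2 / (5 * n) * t := by
    have hlogn : Real.log n ≤ Real.log (n / ε) :=
      Real.log_le_log hn0 (le_div_self hn0.le hε hε1.le)
    rw [div_mul_eq_mul_div, le_div_iff₀ (by positivity), sq, mul_div_assoc,
      Real.log_mul hn0.ne' (by positivity)]
    nlinarith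
  have hmix := pow_mul_le_of_log_div_le (one_sub_two_div_five_mul_nonneg n) le_rfl
    (by positivity) hε hlog
  linarith
end

section
/- Let X be a measurable random variable on a probability space with X ≥ 0 almost surely, let η ≥ 0, and let C ≥ 0, a > 0 be constants such that ℙ(X ≥ δ + η) ≤ C·exp(−a·δ²) for every δ > 0. Then for every real m ≥ 2, 𝔼[X^m] ≤ C · (2m/a)^{m/2} + (2η)^m. -/
/-!
Since `X ≤ max (2η) (2 (X - η)⁺)`, it suffices to bound the `m`-th moment of `Y = 2 (X - η)⁺`,
whose tail is `ℙ(Y ≥ t) ≤ C exp(-a t² / 4)`. The layer-cake formula turns this into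
`E[Y^m] ≤ C m ∫₀^∞ t^(m-1) exp(-a t² / 4) dt = C (4 / a)^(m/2) Γ(m/2 + 1)`, and
`Γ(x + 1) ≤ x^x` for `x ≥ 1` follows from the log-convexity of `Γ` between consecutive integers.
-/

open MeasureTheory Set
open scoped Nat

namespace Real

lemma rpow_self_mul_add_one_rpow_le {n t : ℝ} (hn : 1 ≤ n) (ht : 0 ≤ t) :
    n ^ n * (n + 1) ^ t ≤ (n + t) ^ (n + t) := by
  have hn0 : 0 < n := by linarith
  have hx0 : 0 < n + t := by linarith
  -- the tangent line of `x ↦ x log x` at `n`, evaluated at `n + t`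
  have tangent : n * log n + t * (log n + 1) ≤ (n + t) * log (n + t) := by
    have h := one_sub_inv_le_log_of_pos (div_pos hx0 hn0)
    rw [log_div hx0.ne' hn0.ne', inv_div, le_sub_iff_add_le] at h
    have h' := mul_le_mul_of_nonneg_left h hx0.le
    field_simp at h'
    nlinarith
  have log_succ_le : log (n + 1) ≤ log n + 1 := by
    have h2 : n + 1 ≤ exp 1 * n := by nlinarith [add_one_le_exp (1 : ℝ)]
    calc log (n + 1) ≤ log (exp 1 * n) := log_le_log (by linarith) h2
      _ = log n + 1 := by rw [log_mul (exp_pos 1).ne' hn0.ne', log_exp, add_comm]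
  rw [← log_le_log_iff (by positivity) (by positivity), log_mul (by positivity) (by positivity),
    log_rpow hn0, log_rpow (by linarith), log_rpow hx0]
  nlinarith [mul_le_mul_of_nonneg_left log_succ_le ht]

lemma Gamma_natCast_add_add_one_le (n : ℕ) {t : ℝ} (ht₀ : 0 ≤ t) (ht₁ : t ≤ 1) :
    Gamma (n + t + 1) ≤ n ! * (n + 1) ^ t := by
  have hfac : (0 : ℝ) < n ! := by exact_mod_cast n.factorial_pos
  have hconv := convexOn_log_Gamma.2 (mem_Ioi.2 (by positivity : (0 : ℝ) < n + 1))
    (mem_Ioi.2 (by positivity : (0 : ℝ) < n + 2)) (sub_nonneg.2 ht₁) ht₀ (sub_add_cancel 1 t)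
  have hGamma₁ : Gamma (n + 1) = n ! := by exact_mod_cast Gamma_nat_eq_factorial n
  have hGamma₂ : Gamma (n + 2) = (n + 1) * n ! := by
    rw [show (n : ℝ) + 2 = n + 1 + 1 by ring, Gamma_add_one (by positivity), hGamma₁]
  simp only [Function.comp, smul_eq_mul, hGamma₁, hGamma₂] at hconv
  rw [show (1 - t) * (n + 1) + t * (n + 2) = n + t + 1 by ring,
    log_mul (by positivity) hfac.ne'] at hconv
  calc Gamma (n + t + 1) = exp (log (Gamma (n + t + 1))) :=
        (exp_log (Gamma_pos_of_pos (by positivity))).symm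
    _ ≤ exp (log n ! + t * log (n + 1)) := exp_le_exp.2 (by linarith)
    _ = n ! * (n + 1) ^ t := by
        rw [exp_add, exp_log hfac, rpow_def_of_pos (by positivity), mul_comm t]

lemma Gamma_add_one_le_rpow_self {x : ℝ} (hx : 1 ≤ x) : Gamma (x + 1) ≤ x ^ x := by
  set n := ⌊x⌋₊
  have hn : (1 : ℝ) ≤ n := by exact_mod_cast Nat.le_floor (by exact_mod_cast hx)
  have hnx : (n : ℝ) ≤ x := Nat.floor_le (by linarith)
  have hxn : x < n + 1 := Nat.lt_floor_add_one x
  calc Gamma (x + 1) = Gamma (n + (x - n) + 1) := by ring_nf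
    _ ≤ n ! * (n + 1) ^ (x - n) := Gamma_natCast_add_add_one_le n (by linarith) (by linarith)
    _ ≤ n ^ (n : ℝ) * (n + 1) ^ (x - n) := by
        gcongr
        rw [rpow_natCast]
        exact_mod_cast n.factorial_le_pow
    _ ≤ (n + (x - n)) ^ (n + (x - n)) := rpow_self_mul_add_one_rpow_le hn (by linarith)
    _ = x ^ x := by ring_nf

lemma mul_integral_rpow_sub_one_mul_exp_neg_mul_sq_le {b m : ℝ} (hb : 0 < b) (hm : 2 ≤ m) :
    m * ∫ t in Ioi 0, t ^ (m - 1) * exp (-b * t ^ 2) ≤ (m / (2 * b)) ^ (m / 2) := by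
  have hintegral : ∫ t in Ioi 0, t ^ (m - 1) * exp (-b * t ^ 2)
      = b ^ (-m / 2) * (1 / 2) * Gamma (m / 2) := by
    have h := integral_rpow_mul_exp_neg_mul_rpow two_pos (by linarith : -1 < m - 1) hb
    rw [sub_add_cancel] at h
    rw [← h]
    refine setIntegral_congr_fun measurableSet_Ioi fun t _ => ?_
    norm_num [rpow_natCast t 2]
  have hGamma : m * (1 / 2) * Gamma (m / 2) = Gamma (m / 2 + 1) := by
    rw [Gamma_add_one (by positivity)]
    ring
  calc m * ∫ t in Ioi 0, t ^ (m - 1) * exp (-b * t ^ 2)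
      = b ^ (-m / 2) * Gamma (m / 2 + 1) := by rw [hintegral, ← hGamma]; ring
    _ ≤ b ^ (-m / 2) * (m / 2) ^ (m / 2) := by
        gcongr
        exact Gamma_add_one_le_rpow_self (by linarith)
    _ = (m / (2 * b)) ^ (m / 2) := by
        rw [neg_div, rpow_neg hb.le, ← inv_rpow hb.le, ← mul_rpow (by positivity) (by positivity)]
        ring_nf

end Real

open Real

theorem MeasureTheory.lintegral_rpow_le_of_meas_le_mul_exp_neg_mul_sq {α : Type*}
    [MeasurableSpace α] {μ : Measure α} {f : α → ℝ} (hf_nn : 0 ≤ᵐ[μ] f) (hf : AEMeasurable f μ)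
    {C b m : ℝ} (hC : 0 ≤ C) (hb : 0 < b) (hm : 2 ≤ m)
    (htail : ∀ t > 0, μ {x | t ≤ f x} ≤ ENNReal.ofReal (C * exp (-b * t ^ 2))) :
    ∫⁻ x, ENNReal.ofReal (f x ^ m) ∂μ ≤ ENNReal.ofReal (C * (m / (2 * b)) ^ (m / 2)) := by
  have hdensity_nn : 0 ≤ᵐ[volume.restrict (Ioi 0)] fun t : ℝ ↦ t ^ (m - 1) * exp (-b * t ^ 2) :=
    (ae_restrict_mem measurableSet_Ioi).mono fun t ht ↦ by have : 0 < t := ht; positivity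
  rw [lintegral_rpow_eq_lintegral_meas_le_mul μ hf_nn hf (by linarith)]
  calc ENNReal.ofReal m * ∫⁻ t in Ioi 0, μ {x | t ≤ f x} * ENNReal.ofReal (t ^ (m - 1))
      ≤ ENNReal.ofReal m *
          ∫⁻ t in Ioi 0, ENNReal.ofReal (C * (t ^ (m - 1) * exp (-b * t ^ 2))) := by
        gcongr ENNReal.ofReal m * ?_
        refine setLIntegral_mono' measurableSet_Ioi fun t (ht : 0 < t) ↦ ?_
        calc μ {x | t ≤ f x} * ENNReal.ofReal (t ^ (m - 1))
            ≤ ENNReal.ofReal (C * exp (-b * t ^ 2)) * ENNReal.ofReal (t ^ (m - 1)) := by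
              gcongr
              exact htail t ht
          _ = ENNReal.ofReal (C * (t ^ (m - 1) * exp (-b * t ^ 2))) := by
              rw [← ENNReal.ofReal_mul (by positivity)]
              ring_nf
    _ = ENNReal.ofReal (C * (m * ∫ t in Ioi 0, t ^ (m - 1) * exp (-b * t ^ 2))) := by
        rw [← ofReal_integral_eq_lintegral_ofReal, integral_const_mul,
          ← ENNReal.ofReal_mul (by linarith)]
        · ring_nf
        · exact (integrableOn_rpow_mul_exp_neg_mul_sq hb (by linarith)).const_mul C
        · exact hdensity_nn.mono fun t ht ↦ mul_nonneg hC ht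
    _ ≤ ENNReal.ofReal (C * (m / (2 * b)) ^ (m / 2)) := by
        gcongr
        exact mul_integral_rpow_sub_one_mul_exp_neg_mul_sq_le hb hm

lemma rpow_le_two_mul_rpow_add_two_mul_posPart_sub_rpow {x η m : ℝ} (hx : 0 ≤ x) (hη : 0 ≤ η)
    (hm : 0 ≤ m) : x ^ m ≤ (2 * η) ^ m + (2 * (x - η)⁺) ^ m := by
  rcases le_total x (2 * η) with h | h
  · have := rpow_le_rpow hx h hm
    have : 0 ≤ (2 * (x - η)⁺) ^ m := by positivity
    linarith
  · have hx_le : x ≤ 2 * (x - η)⁺ := by rw [posPart_eq_self.2 (by linarith)]; linarith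
    have := rpow_le_rpow hx hx_le hm
    have : 0 ≤ (2 * η) ^ m := by positivity
    linarith

/-- Moment bounds from a shifted Gaussian tail bound: if `X ≥ 0` a.s. and
`ℙ(X ≥ δ + η) ≤ C e^{−aδ²}` for all `δ > 0`, then for `m ≥ 2`,
`𝔼[X^m] ≤ C (2m/a)^{m/2} + (2η)^m`. -/
theorem moment_bound_from_shifted_tail {Ω : Type*} [MeasurableSpace Ω]
    (ℙ : Measure Ω) [IsProbabilityMeasure ℙ]
    (X : Ω → ℝ) (hX : Measurable X) (h0 : ∀ᵐ ω ∂ℙ, 0 ≤ X ω)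
    (η C a : ℝ) (hη : 0 ≤ η) (hC : 0 ≤ C) (ha : 0 < a)
    (htail : ∀ δ : ℝ, 0 < δ →
      ℙ {ω | δ + η ≤ X ω} ≤ ENNReal.ofReal (C * Real.exp (-a * δ ^ 2)))
    (m : ℝ) (hm : 2 ≤ m) :
    ∫⁻ ω, ENNReal.ofReal (X ω ^ m) ∂ℙ
      ≤ ENNReal.ofReal (C * (2 * m / a) ^ (m / 2) + (2 * η) ^ m) := by
  set Y : Ω → ℝ := fun ω ↦ 2 * (X ω - η)⁺
  have hY_tail (t : ℝ) (ht : 0 < t) :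
      ℙ {ω | t ≤ Y ω} ≤ ENNReal.ofReal (C * exp (-(a / 4) * t ^ 2)) := by
    calc ℙ {ω | t ≤ Y ω} ≤ ℙ {ω | t / 2 + η ≤ X ω} := by
          refine measure_mono fun ω (hω : t ≤ 2 * (X ω - η)⁺) ↦ ?_
          have : 0 < (X ω - η)⁺ := by linarith
          rw [posPart_eq_self.2 (posPart_pos_iff.1 this).le] at hω
          show t / 2 + η ≤ X ω
          linarith
      _ ≤ ENNReal.ofReal (C * exp (-a * (t / 2) ^ 2)) := htail _ (by positivity)
      _ = ENNReal.ofReal (C * exp (-(a / 4) * t ^ 2)) := by ring_nf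
  have hY_moment :
      ∫⁻ ω, ENNReal.ofReal (Y ω ^ m) ∂ℙ ≤ ENNReal.ofReal (C * (2 * m / a) ^ (m / 2)) := by
    have h := lintegral_rpow_le_of_meas_le_mul_exp_neg_mul_sq (.of_forall fun ω ↦ by positivity)
      (by fun_prop) hC (by positivity) hm hY_tail
    rwa [show m / (2 * (a / 4)) = 2 * m / a by field_simp; ring] at h
  calc ∫⁻ ω, ENNReal.ofReal (X ω ^ m) ∂ℙ
      ≤ ∫⁻ ω, (ENNReal.ofReal ((2 * η) ^ m) + ENNReal.ofReal (Y ω ^ m)) ∂ℙ := by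
        refine lintegral_mono_ae (h0.mono fun ω hω ↦ ?_)
        rw [← ENNReal.ofReal_add (by positivity) (by positivity)]
        exact ENNReal.ofReal_le_ofReal
          (rpow_le_two_mul_rpow_add_two_mul_posPart_sub_rpow hω hη (by linarith))
    _ = ENNReal.ofReal ((2 * η) ^ m) + ∫⁻ ω, ENNReal.ofReal (Y ω ^ m) ∂ℙ := by
        rw [lintegral_add_left measurable_const, lintegral_const, measure_univ, mul_one]
    _ ≤ ENNReal.ofReal ((2 * η) ^ m) + ENNReal.ofReal (C * (2 * m / a) ^ (m / 2)) := by gcongr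
    _ = ENNReal.ofReal (C * (2 * m / a) ^ (m / 2) + (2 * η) ^ m) := by
        rw [← ENNReal.ofReal_add (by positivity) (by positivity), add_comm]
end

section
/- Fix d ≥ 1, k ≥ 1, K ≥ 1, and let μ_H be the Haar probability measure on the unitary group U(d). A balanced monomial of degree j is a function M : U(d) → ℂ of the form M(U) = ∏_{t<j} U(p(t), q(t)) · ∏_{t<j} conj(U(r(t), s(t))) for index maps p, q, r, s : Fin j → Fin d. Let ν be a finitely supported probability distribution on U(d) (a finite family of unitaries U_i with weights summing to 1) that is an ε-approximate unitary k-design in the monomial sense: for every j ≤ k and every balanced monomial M of degree j, |𝔼_{U∼ν} M(U) − ∫ M dμ_H| ≤ ε/d^k. Let f : U(d) → ℝ be a real-valued function of the form f = Σ_{i∈I} α_i·M_i, a finite sum with complex coefficients α_i where each M_i is a balanced monomial of degree at most K, and set α = Σ_i |α_i|. Suppose there are constants C ≥ 0, a > 0 and μ ∈ ℝ with ℙ_{U∼μ_H}(|f(U) − μ| ≥ δ) ≤ C·exp(−a·δ²) for all δ > 0. Then for every integer m ≥ 1 with 2mK ≤ k and every δ > 0, ℙ_{U∼ν}(|f(U)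 − μ| ≥ δ) ≤ δ^{−2m} · ( C·(m/a)^m + (ε/d^k)·(α + |μ|)^{2m} ). -/
open Matrix MeasureTheory

open scoped Classical in
/-- A balanced monomial of degree `j` in the entries of a unitary:
`M(U) = ∏_{t<j} U(p t, q t) · ∏_{t<j} conj(U(r t, s t))`. -/
noncomputable def balancedMonomial (d j : ℕ) (p q r s : Fin j → Fin d)
    (U : Matrix.unitaryGroup (Fin d) ℂ) : ℂ :=
  (∏ t, (U : Matrix (Fin d) (Fin d) ℂ) (p t) (q t)) *
    ∏ t, (starRingEnd ℂ) ((U : Matrix (Fin d) (Fin d) ℂ) (r t) (s t))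

/-!
Expand `(f - μ₀) ^ (2m)` into balanced monomials of degree at most `2mK ≤ k`. The design matches
the Haar average of each monomial up to `ε / d^k`, and the coefficients of the expansion have
total modulus at most `(∑ ‖αᵢ‖ + |μ₀|) ^ (2m)`, so the `2m`-th central moment of `f` on the design
exceeds its Haar moment by at most `(ε / d^k) (∑ ‖αᵢ‖ + |μ₀|) ^ (2m)`. The Haar moment is at most
`C (m / a)^m`: integrating the sub-Gaussian tail against `2m t^(2m-1)` gives the Gamma integral
`C m! / a^m`. Markov's inequality for the `2m`-th moment on the design concludes.
-/

open Set

theorem integral_rpow_mul_exp_neg_mul_sq_Ioi {a s : ℝ} (ha : 0 < a) (hs : 0 < s) :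
    ∫ t in Ioi (0 : ℝ), t ^ (2 * s - 1) * Real.exp (-a * t ^ 2) =
      Real.Gamma s / (2 * a ^ s) := by
  have h := integral_rpow_mul_exp_neg_mul_rpow two_pos (by linarith : -1 < 2 * s - 1) ha
  simp only [Real.rpow_two, sub_add_cancel, mul_div_cancel_left₀ s two_ne_zero,
    neg_div, Real.rpow_neg ha.le] at h
  rw [h]
  field_simp

theorem integral_rpow_le_of_meas_le {Ω : Type*} [MeasurableSpace Ω] {μ : Measure Ω}
    {g : Ω → ℝ} (hg_nn : 0 ≤ᵐ[μ] g) (hg : AEMeasurable g μ) {p : ℝ} (hp : 0 < p)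
    {F : ℝ → ℝ} (hF_nn : ∀ t > 0, 0 ≤ F t)
    (hF : IntegrableOn (fun t => t ^ (p - 1) * F t) (Ioi 0))
    (htail : ∀ t > 0, μ {ω | t ≤ g ω} ≤ ENNReal.ofReal (F t)) :
    ∫ ω, g ω ^ p ∂μ ≤ p * ∫ t in Ioi 0, t ^ (p - 1) * F t := by
  have hF_int_nn : 0 ≤ ∫ t in Ioi 0, t ^ (p - 1) * F t :=
    setIntegral_nonneg measurableSet_Ioi fun t ht =>
      mul_nonneg (Real.rpow_nonneg (le_of_lt ht) _) (hF_nn t ht)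
  have hgp_nn : 0 ≤ᵐ[μ] fun ω => g ω ^ p := by
    filter_upwards [hg_nn] with ω hω using Real.rpow_nonneg hω p
  rw [integral_eq_lintegral_of_nonneg_ae hgp_nn (hg.pow_const p).aestronglyMeasurable]
  refine ENNReal.toReal_le_of_le_ofReal (by positivity) ?_
  rw [lintegral_rpow_eq_lintegral_meas_le_mul μ hg_nn hg hp, ENNReal.ofReal_mul hp.le,
    ofReal_integral_eq_lintegral_ofReal hF (ae_restrict_of_forall_mem measurableSet_Ioi
      fun t ht => mul_nonneg (Real.rpow_nonneg (le_of_lt ht) _) (hF_nn t ht))]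
  refine mul_le_mul_right (setLIntegral_mono' measurableSet_Ioi fun t (ht : 0 < t) => ?_) _
  rw [mul_comm, ENNReal.ofReal_mul (Real.rpow_nonneg ht.le _)]
  exact mul_le_mul_right (htail t ht) _

theorem integral_pow_le_of_subgaussian_tail {Ω : Type*} [MeasurableSpace Ω] {μ : Measure Ω}
    {g : Ω → ℝ} (hg_nn : 0 ≤ᵐ[μ] g) (hg : AEMeasurable g μ) {C a : ℝ} (hC : 0 ≤ C)
    (ha : 0 < a) (htail : ∀ t > 0, μ {ω | t ≤ g ω} ≤ ENNReal.ofReal (C * Real.exp (-a * t ^ 2)))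
    {m : ℕ} (hm : 1 ≤ m) :
    ∫ ω, g ω ^ (2 * m) ∂μ ≤ C * (m / a) ^ m := by
  have hm0 : (0 : ℝ) < m := by exact_mod_cast hm
  have hint : IntegrableOn (fun t => t ^ (2 * (m : ℝ) - 1) * (C * Real.exp (-a * t ^ 2)))
      (Ioi 0) := by
    refine IntegrableOn.congr_fun ((integrableOn_rpow_mul_exp_neg_mul_sq ha
      (s := 2 * (m : ℝ) - 1) (by linarith)).const_mul C) (fun t _ => by ring) measurableSet_Ioi
  have hmoment := integral_rpow_le_of_meas_le hg_nn hg (by positivity)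
    (fun t _ => mul_nonneg hC (Real.exp_pos _).le) hint htail
  have hgamma : (m : ℝ) * Real.Gamma m = m.factorial := by
    rw [← Real.Gamma_add_one hm0.ne', Real.Gamma_nat_eq_factorial]
  have hI : ∫ t in Ioi 0, t ^ (2 * (m : ℝ) - 1) * (C * Real.exp (-a * t ^ 2)) =
      C * (Real.Gamma m / (2 * a ^ m)) := by
    simp_rw [mul_left_comm _ C]
    rw [integral_const_mul, integral_rpow_mul_exp_neg_mul_sq_Ioi ha hm0, Real.rpow_natCast]
  rw [hI] at hmoment
  calc ∫ ω, g ω ^ (2 * m) ∂μ = ∫ ω, g ω ^ (2 * (m : ℝ)) ∂μ := by norm_cast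
    _ ≤ C * (m.factorial / a ^ m) := by
      rw [← hgamma]; convert hmoment using 1; field_simp
    _ ≤ C * (m / a) ^ m := by
      rw [div_pow]; gcongr; exact_mod_cast Nat.factorial_le_pow m

theorem Finset.sum_filter_le_div_pow {ι : Type*} (s : Finset ι) {w x : ι → ℝ}
    (hw : ∀ i ∈ s, 0 ≤ w i) {δ : ℝ} (hδ : 0 < δ) (n : ℕ) :
    ∑ i ∈ s with δ ≤ |x i|, w i ≤ (∑ i ∈ s, w i * |x i| ^ n) / δ ^ n := by
  rw [le_div_iff₀ (pow_pos hδ n), Finset.sum_mul]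
  calc ∑ i ∈ s with δ ≤ |x i|, w i * δ ^ n
      ≤ ∑ i ∈ s with δ ≤ |x i|, w i * |x i| ^ n := by
        refine Finset.sum_le_sum fun i hi => ?_
        rw [Finset.mem_filter] at hi
        exact mul_le_mul_of_nonneg_left (pow_le_pow_left₀ hδ.le hi.2 n) (hw i hi.1)
    _ ≤ ∑ i ∈ s, w i * |x i| ^ n :=
        Finset.sum_le_sum_of_subset_of_nonneg (Finset.filter_subset _ s)
          fun i hi _ => mul_nonneg (hw i hi) (pow_nonneg (abs_nonneg _) n)

section BalancedMonomial

variable {d : ℕ}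

@[simp]
theorem balancedMonomial_zero (p q r s : Fin 0 → Fin d) (V : unitaryGroup (Fin d) ℂ) :
    balancedMonomial d 0 p q r s V = 1 := by
  simp [balancedMonomial]

theorem balancedMonomial_mul {j₁ j₂ : ℕ} (p₁ q₁ r₁ s₁ : Fin j₁ → Fin d)
    (p₂ q₂ r₂ s₂ : Fin j₂ → Fin d) (V : unitaryGroup (Fin d) ℂ) :
    balancedMonomial d j₁ p₁ q₁ r₁ s₁ V * balancedMonomial d j₂ p₂ q₂ r₂ s₂ V =
      balancedMonomial d (j₁ + j₂) (Fin.append p₁ p₂) (Fin.append q₁ q₂) (Fin.append r₁ r₂)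
        (Fin.append s₁ s₂) V := by
  simp only [balancedMonomial, Fin.prod_univ_add, Fin.append_left, Fin.append_right]
  ring

theorem continuous_balancedMonomial {j : ℕ} (p q r s : Fin j → Fin d) :
    Continuous (balancedMonomial d j p q r s) := by
  have hentry (i k : Fin d) : Continuous fun V : unitaryGroup (Fin d) ℂ =>
      (V : Matrix (Fin d) (Fin d) ℂ) i k :=
    continuous_subtype_val.matrix_elem i k
  exact (continuous_finsetProd _ fun t _ => hentry _ _).mul
    (continuous_finsetProd _ fun t _ => Complex.continuous_conj.comp (hentry _ _))

theorem norm_balancedMonomial_le_one {j : ℕ} (p q r s : Fin j → Fin d)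
    (V : unitaryGroup (Fin d) ℂ) : ‖balancedMonomial d j p q r s V‖ ≤ 1 := by
  have hentry (i k : Fin d) : ‖(V : Matrix (Fin d) (Fin d) ℂ) i k‖ ≤ 1 :=
    entry_norm_bound_of_unitary V.2 i k
  rw [balancedMonomial, norm_mul, norm_prod, norm_prod]
  refine mul_le_one₀ ?_ (Finset.prod_nonneg fun _ _ => norm_nonneg _) ?_ <;>
    refine Finset.prod_le_one (fun _ _ => norm_nonneg _) fun t _ => ?_
  · exact hentry _ _
  · simpa only [Complex.norm_conj] using hentry _ _

theorem integrable_balancedMonomial [MeasurableSpace (unitaryGroup (Fin d) ℂ)]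
    [OpensMeasurableSpace (unitaryGroup (Fin d) ℂ)] (μ : Measure (unitaryGroup (Fin d) ℂ))
    [IsFiniteMeasure μ] {j : ℕ} (p q r s : Fin j → Fin d) :
    Integrable (balancedMonomial d j p q r s) μ :=
  (integrable_const (1 : ℝ)).mono' (continuous_balancedMonomial p q r s).aestronglyMeasurable
    (ae_of_all _ (norm_balancedMonomial_le_one p q r s))

end BalancedMonomial

/-- `B` bounds the total modulus of the coefficients: it is what the design error scales with, and
it is submultiplicative under products. -/
def IsBalancedPolynomial (d K : ℕ) (B : ℝ) (g : unitaryGroup (Fin d) ℂ → ℂ) : Prop :=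
  ∃ (κ : Type) (_ : Fintype κ) (β : κ → ℂ) (J : κ → ℕ) (p q r s : (i : κ) → Fin (J i) → Fin d),
    (∀ i, J i ≤ K) ∧ ∑ i, ‖β i‖ ≤ B ∧
      g = fun V => ∑ i, β i * balancedMonomial d (J i) (p i) (q i) (r i) (s i) V

namespace IsBalancedPolynomial

variable {d K K₁ K₂ : ℕ} {B B₁ B₂ : ℝ} {g g₁ g₂ : unitaryGroup (Fin d) ℂ → ℂ}

theorem of_sum {κ : Type} [Fintype κ] (β : κ → ℂ) (J : κ → ℕ) (hJ : ∀ i, J i ≤ K)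
    (p q r s : (i : κ) → Fin (J i) → Fin d) :
    IsBalancedPolynomial d K (∑ i, ‖β i‖)
      (fun V => ∑ i, β i * balancedMonomial d (J i) (p i) (q i) (r i) (s i) V) :=
  ⟨κ, inferInstance, β, J, p, q, r, s, hJ, le_rfl, rfl⟩

theorem const (K : ℕ) (c : ℂ) : IsBalancedPolynomial d K ‖c‖ fun _ => c := by
  refine ⟨Unit, inferInstance, fun _ => c, fun _ => 0, fun _ => Fin.elim0, fun _ => Fin.elim0,
    fun _ => Fin.elim0, fun _ => Fin.elim0, fun _ => K.zero_le, by simp, ?_⟩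
  simp

theorem mono (hg : IsBalancedPolynomial d K B g) (hK : K ≤ K₂) (hB : B ≤ B₂) :
    IsBalancedPolynomial d K₂ B₂ g := by
  obtain ⟨κ, _, β, J, p, q, r, s, hJ, hβ, rfl⟩ := hg
  exact ⟨κ, inferInstance, β, J, p, q, r, s, fun i => (hJ i).trans hK, hβ.trans hB, rfl⟩

theorem add (h₁ : IsBalancedPolynomial d K B₁ g₁) (h₂ : IsBalancedPolynomial d K B₂ g₂) :
    IsBalancedPolynomial d K (B₁ + B₂) (g₁ + g₂) := by
  obtain ⟨κ₁, _, β₁, J₁, p₁, q₁, r₁, s₁, hJ₁, hβ₁, rfl⟩ := h₁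
  obtain ⟨κ₂, _, β₂, J₂, p₂, q₂, r₂, s₂, hJ₂, hβ₂, rfl⟩ := h₂
  refine ⟨κ₁ ⊕ κ₂, inferInstance, Sum.elim β₁ β₂, Sum.elim J₁ J₂,
    fun | .inl i => p₁ i | .inr i => p₂ i, fun | .inl i => q₁ i | .inr i => q₂ i,
    fun | .inl i => r₁ i | .inr i => r₂ i, fun | .inl i => s₁ i | .inr i => s₂ i,
    fun | .inl i => hJ₁ i | .inr i => hJ₂ i, ?_, ?_⟩
  · simpa only [Fintype.sum_sum_type, Sum.elim_inl, Sum.elim_inr] using add_le_add hβ₁ hβ₂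
  · ext V
    simp only [Pi.add_apply, Fintype.sum_sum_type, Sum.elim_inl, Sum.elim_inr]

theorem mul (h₁ : IsBalancedPolynomial d K₁ B₁ g₁) (h₂ : IsBalancedPolynomial d K₂ B₂ g₂) :
    IsBalancedPolynomial d (K₁ + K₂) (B₁ * B₂) (g₁ * g₂) := by
  obtain ⟨κ₁, _, β₁, J₁, p₁, q₁, r₁, s₁, hJ₁, hβ₁, rfl⟩ := h₁
  obtain ⟨κ₂, _, β₂, J₂, p₂, q₂, r₂, s₂, hJ₂, hβ₂, rfl⟩ := h₂
  refine ⟨κ₁ × κ₂, inferInstance, fun x => β₁ x.1 * β₂ x.2, fun x => J₁ x.1 + J₂ x.2,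
    fun x => Fin.append (p₁ x.1) (p₂ x.2), fun x => Fin.append (q₁ x.1) (q₂ x.2),
    fun x => Fin.append (r₁ x.1) (r₂ x.2), fun x => Fin.append (s₁ x.1) (s₂ x.2),
    fun x => add_le_add (hJ₁ x.1) (hJ₂ x.2), ?_, ?_⟩
  · simp only [norm_mul, Fintype.sum_prod_type, ← Finset.sum_mul_sum]
    exact mul_le_mul hβ₁ hβ₂ (Finset.sum_nonneg fun _ _ => norm_nonneg _)
      ((Finset.sum_nonneg fun _ _ => norm_nonneg _).trans hβ₁)
  · ext V
    simp only [Pi.mul_apply, Finset.sum_mul_sum, Fintype.sum_prod_type, ← balancedMonomial_mul]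
    exact Finset.sum_congr rfl fun _ _ => Finset.sum_congr rfl fun _ _ => by ring

theorem pow (hg : IsBalancedPolynomial d K B g) (n : ℕ) :
    IsBalancedPolynomial d (n * K) (B ^ n) (g ^ n) := by
  induction n with
  | zero => simpa [Pi.one_def] using const (d := d) 0 1
  | succ n ih => simpa [add_mul, pow_succ] using ih.mul hg

theorem continuous (hg : IsBalancedPolynomial d K B g) : Continuous g := by
  obtain ⟨κ, _, β, J, p, q, r, s, -, -, rfl⟩ := hg
  exact continuous_finsetSum _ fun i _ =>
    continuous_const.mul (continuous_balancedMonomial _ _ _ _)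

theorem norm_sum_sub_integral_le [MeasurableSpace (unitaryGroup (Fin d) ℂ)]
    [OpensMeasurableSpace (unitaryGroup (Fin d) ℂ)] {μ : Measure (unitaryGroup (Fin d) ℂ)}
    [IsFiniteMeasure μ] {ι : Type*} [Fintype ι] {w : ι → ℂ} {U : ι → unitaryGroup (Fin d) ℂ}
    {η : ℝ} (hdesign : ∀ j ≤ K, ∀ p q r s : Fin j → Fin d,
      ‖∑ i, w i * balancedMonomial d j p q r s (U i) - ∫ V, balancedMonomial d j p q r s V ∂μ‖
        ≤ η)
    (hg : IsBalancedPolynomial d K B g) :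
    ‖∑ i, w i * g (U i) - ∫ V, g V ∂μ‖ ≤ η * B := by
  obtain ⟨κ, _, β, J, p, q, r, s, hJ, hβ, rfl⟩ := hg
  set M : κ → unitaryGroup (Fin d) ℂ → ℂ := fun c =>
    balancedMonomial d (J c) (p c) (q c) (r c) (s c)
  have hη : 0 ≤ η :=
    (norm_nonneg _).trans (hdesign 0 K.zero_le Fin.elim0 Fin.elim0 Fin.elim0 Fin.elim0)
  have hsplit : ∑ i, w i * ∑ c, β c * M c (U i) - ∫ V, ∑ c, β c * M c V ∂μ =
      ∑ c, β c * (∑ i, w i * M c (U i) - ∫ V, M c V ∂μ) := by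
    rw [integral_finsetSum _ fun c _ => (integrable_balancedMonomial μ _ _ _ _).const_mul _]
    simp only [integral_const_mul, mul_sub, Finset.sum_sub_distrib, Finset.mul_sum]
    rw [Finset.sum_comm]
    congr 1
    exact Finset.sum_congr rfl fun _ _ => Finset.sum_congr rfl fun _ _ => by ring
  calc ‖∑ i, w i * ∑ c, β c * M c (U i) - ∫ V, ∑ c, β c * M c V ∂μ‖
      ≤ ∑ c, ‖β c‖ * η := by
        rw [hsplit]
        refine (norm_sum_le _ _).trans (Finset.sum_le_sum fun c _ => ?_)
        rw [norm_mul]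
        exact mul_le_mul_of_nonneg_left (hdesign _ (hJ c) _ _ _ _) (norm_nonneg _)
    _ ≤ η * B := by
        rw [← Finset.sum_mul, mul_comm]
        exact mul_le_mul_of_nonneg_left hβ hη

theorem abs_sum_sub_integral_le [MeasurableSpace (unitaryGroup (Fin d) ℂ)]
    [OpensMeasurableSpace (unitaryGroup (Fin d) ℂ)] {μ : Measure (unitaryGroup (Fin d) ℂ)}
    [IsFiniteMeasure μ] {ι : Type*} [Fintype ι] {w : ι → ℝ} {U : ι → unitaryGroup (Fin d) ℂ}
    {η : ℝ} (hdesign : ∀ j ≤ K, ∀ p q r s : Fin j → Fin d,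
      ‖∑ i, (w i : ℂ) * balancedMonomial d j p q r s (U i)
        - ∫ V, balancedMonomial d j p q r s V ∂μ‖ ≤ η)
    {h : unitaryGroup (Fin d) ℂ → ℝ} (hh : IsBalancedPolynomial d K B fun V => (h V : ℂ)) :
    |∑ i, w i * h (U i) - ∫ V, h V ∂μ| ≤ η * B := by
  have hnorm := hh.norm_sum_sub_integral_le hdesign
  rw [integral_complex_ofReal] at hnorm
  exact_mod_cast hnorm

end IsBalancedPolynomial

theorem design_concentration_polynomial_general (d k K : ℕ)
    [MeasurableSpace (Matrix.unitaryGroup (Fin d) ℂ)]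
    [BorelSpace (Matrix.unitaryGroup (Fin d) ℂ)]
    (μH : Measure (Matrix.unitaryGroup (Fin d) ℂ))
    [IsProbabilityMeasure μH]
    (ε : ℝ)
    {ι : Type} [Fintype ι] (w : ι → ℝ) (U : ι → Matrix.unitaryGroup (Fin d) ℂ)
    (hw : ∀ i, 0 ≤ w i)
    -- ν is an ε-approximate unitary k-design in the monomial sense
    (hdesign : ∀ j : ℕ, j ≤ k → ∀ p q r s : Fin j → Fin d,
      ‖∑ i, (w i : ℂ) * balancedMonomial d j p q r s (U i)
          - ∫ V, balancedMonomial d j p q r s V ∂μH‖ ≤ ε / d ^ k)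
    -- f = ∑ᵢ αᵢ Mᵢ is a real-valued polynomial of degree at most K
    {I : Type} [Fintype I] (α : I → ℂ) (J : I → ℕ) (hJ : ∀ i, J i ≤ K)
    (p q r s : (i : I) → Fin (J i) → Fin d)
    (f : Matrix.unitaryGroup (Fin d) ℂ → ℝ)
    (hf : ∀ V, (f V : ℂ) =
      ∑ i, α i * balancedMonomial d (J i) (p i) (q i) (r i) (s i) V)
    -- Haar concentration
    (C a μ₀ : ℝ) (hC : 0 ≤ C) (ha : 0 < a)
    (hconc : ∀ δ : ℝ, 0 < δ →
      μH {V | δ ≤ |f V - μ₀|} ≤ ENNReal.ofReal (C * Real.exp (-a * δ ^ 2)))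
    (m : ℕ) (hm : 1 ≤ m) (hmk : 2 * m * K ≤ k)
    (δ : ℝ) (hδ : 0 < δ) :
    ∑ i ∈ Finset.univ.filter (fun i => δ ≤ |f (U i) - μ₀|), w i
      ≤ (C * ((m : ℝ) / a) ^ m
          + (ε / d ^ k) * ((∑ i, ‖α i‖) + |μ₀|) ^ (2 * m)) / δ ^ (2 * m) := by
  have hdev : IsBalancedPolynomial d K ((∑ i, ‖α i‖) + |μ₀|) fun V => ((f V - μ₀ : ℝ) : ℂ) := by
    convert (IsBalancedPolynomial.of_sum α J hJ p q r s).add (.const K (-(μ₀ : ℂ))) using 1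
    · simp
    · ext V
      simp [hf V, sub_eq_add_neg]
  have hpow : IsBalancedPolynomial d k (((∑ i, ‖α i‖) + |μ₀|) ^ (2 * m))
      fun V => (((f V - μ₀) ^ (2 * m) : ℝ) : ℂ) := by
    simpa only [Pi.pow_def, Complex.ofReal_pow] using (hdev.pow (2 * m)).mono hmk le_rfl
  have hcomp := hpow.abs_sum_sub_integral_le hdesign
  have hcont : Continuous fun V => f V - μ₀ := by
    simpa only [Function.comp_def, Complex.ofReal_re] using
      Complex.continuous_re.comp hdev.continuous
  have hHaar : ∫ V, (f V - μ₀) ^ (2 * m) ∂μH ≤ C * (m / a) ^ m := by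
    simpa only [(even_two_mul m).pow_abs] using integral_pow_le_of_subgaussian_tail
      (ae_of_all _ fun V => abs_nonneg (f V - μ₀)) hcont.abs.aemeasurable hC ha hconc hm
  have hmarkov := Finset.univ.sum_filter_le_div_pow (x := fun i => f (U i) - μ₀)
    (fun i _ => hw i) hδ (2 * m)
  simp only [(even_two_mul m).pow_abs] at hmarkov
  refine hmarkov.trans (div_le_div_of_nonneg_right ?_ (by positivity))
  linarith [(abs_le.mp hcomp).2]

/-- Large deviation bounds for polynomials evaluated on an `ε`-approximate unitary
`k`-design: the Haar concentration bound transfers to the design, up to the stated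
polynomial loss. -/
theorem design_concentration_polynomial (d k K : ℕ) (hd : 1 ≤ d) (hk : 1 ≤ k) (hK : 1 ≤ K)
    [MeasurableSpace (Matrix.unitaryGroup (Fin d) ℂ)]
    [BorelSpace (Matrix.unitaryGroup (Fin d) ℂ)]
    (μH : Measure (Matrix.unitaryGroup (Fin d) ℂ))
    [μH.IsHaarMeasure] [IsProbabilityMeasure μH]
    (ε : ℝ)
    {ι : Type} [Fintype ι] (w : ι → ℝ) (U : ι → Matrix.unitaryGroup (Fin d) ℂ)
    (hw : ∀ i, 0 ≤ w i) (hw1 : ∑ i, w i = 1)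
    -- ν is an ε-approximate unitary k-design in the monomial sense
    (hdesign : ∀ j : ℕ, j ≤ k → ∀ p q r s : Fin j → Fin d,
      ‖∑ i, (w i : ℂ) * balancedMonomial d j p q r s (U i)
          - ∫ V, balancedMonomial d j p q r s V ∂μH‖ ≤ ε / d ^ k)
    -- f = ∑ᵢ αᵢ Mᵢ is a real-valued polynomial of degree at most K
    {I : Type} [Fintype I] (α : I → ℂ) (J : I → ℕ) (hJ : ∀ i, J i ≤ K)
    (p q r s : (i : I) → Fin (J i) → Fin d)
    (f : Matrix.unitaryGroup (Fin d) ℂ → ℝ)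
    (hf : ∀ V, (f V : ℂ) =
      ∑ i, α i * balancedMonomial d (J i) (p i) (q i) (r i) (s i) V)
    -- Haar concentration
    (C a μ₀ : ℝ) (hC : 0 ≤ C) (ha : 0 < a)
    (hconc : ∀ δ : ℝ, 0 < δ →
      μH {V | δ ≤ |f V - μ₀|} ≤ ENNReal.ofReal (C * Real.exp (-a * δ ^ 2)))
    (m : ℕ) (hm : 1 ≤ m) (hmk : 2 * m * K ≤ k)
    (δ : ℝ) (hδ : 0 < δ) :
    ∑ i ∈ Finset.univ.filter (fun i => δ ≤ |f (U i) - μ₀|), w i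
      ≤ (C * ((m : ℝ) / a) ^ m
          + (ε / d ^ k) * ((∑ i, ‖α i‖) + |μ₀|) ^ (2 * m)) / δ ^ (2 * m) :=
  design_concentration_polynomial_general d k K μH ε w U hw hdesign α J hJ p q r s f hf C a μ₀ hC ha
    hconc m hm hmk δ hδ
end
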